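/- arXiv:2605.19857 — 7 statements merged into one kernel-verified Lean document; each statement's English description precedes it below -/
import Mathlib

section
/- Let p be a prime, q = p^e, m, k ≥ 1, and let d be an integer with 0 < d ≤ k(q^m−1). Then there exists a homogeneous polynomial f ∈ 𝔽_{q^m}[x_1,…,x_k] of degree d such that the p-adic valuation of N(f = y^q − y) is at most em⌈k/d⌉. -/
open MvPolynomial Finset

section Helpers

private def graphEquiv {α β : Type*} (f : β → α) : {z : α × β // z.1 = f z.2} ≃ β :=
  { toFun := fun z => z.1.2
    invFun := fun b => ⟨(f b, b), rfl⟩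
    left_inv := fun z => Subtype.ext (Prod.ext z.2.symm rfl)
    right_inv := fun b => rfl }

variable {F : Type} [Field F] [Fintype F]

private lemma sum_split {M : Type} [AddCommMonoid M] {r : ℕ} (j₀ : Fin r) (f : Fin r → M) :
    ∑ j, f j = f j₀ + ∑ i : {i : Fin r // i ≠ j₀}, f i.1 := by
  classical
  rw [Fintype.sum_eq_add_sum_compl j₀]
  congr 1
  refine Finset.sum_subtype _ (fun x => ?_) f
  simp

omit [Field F] in
private lemma card_fun_eq (α : Type) [Fintype α] :
    Nat.card (α → F) = Fintype.card F ^ Fintype.card α := by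
  classical
  rw [Nat.card_eq_fintype_card, Fintype.card_fun]

omit [Field F] in
private lemma card_subtype_add_compl {α : Type} [Fintype α] (P : α → Prop) :
    Nat.card {x // P x} + Nat.card {x // ¬ P x} = Fintype.card α := by
  classical
  rw [Nat.card_eq_fintype_card, Nat.card_eq_fintype_card, Fintype.card_subtype_compl]
  have := Fintype.card_subtype_le P
  omega

private lemma linfiber_card {r : ℕ} (a : Fin r → F) (b : F) {j₀ : Fin r} (hj : a j₀ ≠ 0) :
    Nat.card {ℓ : Fin r → F // ∑ j, ℓ j * a j = b} = Fintype.card F ^ (r - 1) := by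
  classical
  have key : ∀ ℓ : Fin r → F, (∑ j, ℓ j * a j)
      = ℓ j₀ * a j₀ + ∑ i : {i : Fin r // i ≠ j₀}, ℓ i.1 * a i.1 :=
    fun ℓ => sum_split j₀ _
  have hiff : ∀ ℓ : Fin r → F, (∑ j, ℓ j * a j = b) ↔
      ((Equiv.funSplitAt j₀ F ℓ).1
        = (b - ∑ i : {i : Fin r // i ≠ j₀}, (Equiv.funSplitAt j₀ F ℓ).2 i * a i.1) * (a j₀)⁻¹) := by
    intro ℓ
    show (∑ j, ℓ j * a j = b) ↔
      (ℓ j₀ = (b - ∑ i : {i : Fin r // i ≠ j₀}, ℓ i.1 * a i.1) * (a j₀)⁻¹)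
    rw [eq_mul_inv_iff_mul_eq₀ hj, eq_sub_iff_add_eq, key ℓ]
  have e : {ℓ : Fin r → F // ∑ j, ℓ j * a j = b} ≃ ({i : Fin r // i ≠ j₀} → F) :=
    (Equiv.subtypeEquiv (Equiv.funSplitAt j₀ F) hiff).trans
      (graphEquiv (fun v => (b - ∑ i : {i : Fin r // i ≠ j₀}, v i * a i.1) * (a j₀)⁻¹))
  rw [Nat.card_congr e, card_fun_eq]
  congr 1
  rw [Fintype.card_subtype_compl, Fintype.card_subtype_eq, Fintype.card_fin]

omit [Fintype F] in
private lemma sum_zero_coeffs {r : ℕ} (a : Fin r → F) (ha : ∀ j, a j = 0)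
    (ℓ : Fin r → F) : (∑ j, ℓ j * a j) = 0 := by simp [ha]

private lemma linfiber_card_zero {r : ℕ} (a : Fin r → F) (ha : ∀ j, a j = 0) :
    Nat.card {ℓ : Fin r → F // ∑ j, ℓ j * a j = 0} = Fintype.card F ^ r := by
  rw [Nat.card_congr (Equiv.subtypeUnivEquiv (fun ℓ => sum_zero_coeffs a ha ℓ))]
  rw [card_fun_eq, Fintype.card_fin]

omit [Fintype F] in
private lemma linfiber_card_zero' {r : ℕ} (a : Fin r → F) (b : F) (ha : ∀ j, a j = 0)
    (hb : b ≠ 0) :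
    Nat.card {ℓ : Fin r → F // ∑ j, ℓ j * a j = b} = 0 := by
  haveI : IsEmpty {ℓ : Fin r → F // ∑ j, ℓ j * a j = b} :=
    ⟨fun ℓ => hb (by rw [← ℓ.2, sum_zero_coeffs a ha])⟩
  exact Nat.card_of_isEmpty

end Helpers
section Core
variable {F : Type} [Field F] [Fintype F]

private lemma count_core (q : ℕ) {r : ℕ} (hr : 0 < r) {W : Type} [Fintype W]
    (μ : Fin r → (W → F) → F) :
    Nat.card {xy : ((Fin r → F) × (W → F)) × F //
        (∑ j, xy.1.1 j * μ j xy.1.2) = xy.2 ^ q - xy.2}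
      = Fintype.card F ^ r * Nat.card {w : W → F // ¬ ∀ j, μ j w = 0}
        + Fintype.card F ^ r * Nat.card {y : F // y ^ q - y = 0}
            * Nat.card {w : W → F // ∀ j, μ j w = 0} := by
  classical
  have e : {xy : ((Fin r → F) × (W → F)) × F //
        (∑ j, xy.1.1 j * μ j xy.1.2) = xy.2 ^ q - xy.2}
      ≃ Σ wy : (W → F) × F, {ℓ : Fin r → F // ∑ j, ℓ j * μ j wy.1 = wy.2 ^ q - wy.2} :=
    { toFun := fun s => ⟨(s.1.1.2, s.1.2), ⟨s.1.1.1, s.2⟩⟩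
      invFun := fun s => ⟨((s.2.1, s.1.1), s.1.2), s.2.2⟩
      left_inv := fun s => rfl
      right_inv := fun s => rfl }
  rw [Nat.card_congr e, Nat.card_eq_fintype_card, Fintype.card_sigma]
  have hfib : ∀ wy : (W → F) × F,
      Fintype.card {ℓ : Fin r → F // ∑ j, ℓ j * μ j wy.1 = wy.2 ^ q - wy.2}
      = if ∀ j, μ j wy.1 = 0 then
          (if wy.2 ^ q - wy.2 = 0 then Fintype.card F ^ r else 0)
        else Fintype.card F ^ (r - 1) := by
    intro wy
    rw [← Nat.card_eq_fintype_card]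
    by_cases hw : ∀ j, μ j wy.1 = 0
    · rw [if_pos hw]
      by_cases hy : wy.2 ^ q - wy.2 = 0
      · rw [if_pos hy, hy]
        exact linfiber_card_zero _ hw
      · rw [if_neg hy]
        exact linfiber_card_zero' _ _ hw hy
    · rw [if_neg hw]
      push_neg at hw
      obtain ⟨j₀, hj⟩ := hw
      exact linfiber_card _ _ hj
  rw [Finset.sum_congr rfl (fun wy _ => hfib wy), Fintype.sum_prod_type]
  have inner : ∀ w : W → F,
      (∑ y : F, if ∀ j, μ j w = 0 then
          (if y ^ q - y = 0 then Fintype.card F ^ r else 0)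
        else Fintype.card F ^ (r - 1))
      = if ∀ j, μ j w = 0 then
          Nat.card {y : F // y ^ q - y = 0} * Fintype.card F ^ r
        else Fintype.card F ^ r := by
    intro w
    by_cases hw : ∀ j, μ j w = 0
    · simp only [if_pos hw]
      rw [← Finset.sum_filter, Finset.sum_const, smul_eq_mul]
      congr 1
      rw [Nat.card_eq_fintype_card, Fintype.card_subtype]
    · simp only [if_neg hw]
      rw [Finset.sum_const, smul_eq_mul, Finset.card_univ]
      have : Fintype.card F * Fintype.card F ^ (r - 1) = Fintype.card F ^ (r - 1 + 1) := by
        rw [pow_succ]; ring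
      rw [this]
      congr 1
      omega
  rw [Finset.sum_congr rfl (fun w _ => inner w), Finset.sum_ite, Finset.sum_const,
    Finset.sum_const, smul_eq_mul, smul_eq_mul]
  have h1 : (univ.filter (fun w : W → F => ∀ j, μ j w = 0)).card
      = Nat.card {w : W → F // ∀ j, μ j w = 0} := by
    rw [Nat.card_eq_fintype_card, Fintype.card_subtype]
  have h2 : (univ.filter (fun w : W → F => ¬ ∀ j, μ j w = 0)).card
      = Nat.card {w : W → F // ¬ ∀ j, μ j w = 0} := by
    rw [Nat.card_eq_fintype_card, Fintype.card_subtype]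
  rw [h1, h2]
  ring

end Core
section Poly
variable {F : Type} [Field F] [Fintype F]

private lemma NN_rename (q : ℕ) {V : Type} [Fintype V] {k : ℕ} (e : V ≃ Fin k)
    (f : MvPolynomial V F) :
    Nat.card {xy : (Fin k → F) × F // eval xy.1 (rename e f) = xy.2 ^ q - xy.2}
      = Nat.card {xy : (V → F) × F // eval xy.1 f = xy.2 ^ q - xy.2} := by
  apply Nat.card_congr
  refine Equiv.subtypeEquiv
    (Equiv.prodCongr (Equiv.arrowCongr e.symm (Equiv.refl F)) (Equiv.refl F)) (fun xy => ?_)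
  rw [eval_rename]
  simp [Equiv.arrowCongr, Function.comp]

private lemma NN_pivot (q : ℕ) {r : ℕ} (hr : 0 < r) {W : Type} [Fintype W]
    (M : Fin r → MvPolynomial W F) :
    Nat.card {xy : ((Fin r ⊕ W) → F) × F //
        eval xy.1 (∑ j, X (Sum.inl j) * rename Sum.inr (M j)) = xy.2 ^ q - xy.2}
      = Fintype.card F ^ r * Nat.card {w : W → F // ¬ ∀ j, eval w (M j) = 0}
        + Fintype.card F ^ r * Nat.card {y : F // y ^ q - y = 0}
            * Nat.card {w : W → F // ∀ j, eval w (M j) = 0} := by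
  rw [← count_core q hr (fun j (w : W → F) => eval w (M j))]
  apply Nat.card_congr
  refine Equiv.subtypeEquiv
    (Equiv.prodCongr (Equiv.sumArrowEquivProdArrow _ _ F) (Equiv.refl F)) (fun xy => ?_)
  have hev : eval xy.1 (∑ j, X (Sum.inl j) * rename Sum.inr (M j))
      = ∑ j, xy.1 (Sum.inl j) * eval (xy.1 ∘ Sum.inr) (M j) := by
    rw [map_sum]
    refine Finset.sum_congr rfl (fun j _ => ?_)
    rw [eval_mul, eval_X, eval_rename]
  rw [hev]
  simp [Equiv.sumArrowEquivProdArrow, Function.comp]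

end Poly
open Finset

private lemma charP_of_card (p n : ℕ) [Fact p.Prime] (hn : n ≠ 0) (F : Type) [Field F]
    [Fintype F] (hF : Fintype.card F = p ^ n) : CharP F p := by
  haveI : CharP F (ringChar F) := ringChar.charP F
  obtain ⟨n', hp', hcard⟩ := FiniteField.card F (ringChar F)
  have hdvd : p ∣ ringChar F ^ (n' : ℕ) := by
    rw [← hcard, hF]
    exact dvd_pow_self p hn
  have hpr : p = ringChar F :=
    (Nat.prime_dvd_prime_iff_eq Fact.out hp').mp ((Fact.out (p := p.Prime)).dvd_of_dvd_pow hdvd)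
  rw [hpr]
  exact ringChar.charP F

private lemma p_dvd_K (p e m : ℕ) [Fact p.Prime] (he : 1 ≤ e) (hm : 1 ≤ m)
    (F : Type) [Field F] [Fintype F] (hF : Fintype.card F = (p ^ e) ^ m) :
    p ∣ Nat.card {y : F // y ^ p ^ e - y = 0} := by
  have hpp : p.Prime := Fact.out
  have hF' : Fintype.card F = p ^ (e * m) := by rw [hF, pow_mul]
  haveI : CharP F p := charP_of_card p (e * m) (by positivity) F hF'
  let S : AddSubgroup F :=
  { carrier := {y : F | y ^ p ^ e - y = 0}
    zero_mem' := by
      simp [zero_pow (pow_ne_zero e hpp.ne_zero)]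
    add_mem' := by
      intro a b ha hb
      simp only [Set.mem_setOf_eq] at *
      rw [add_pow_char_pow]
      linear_combination ha + hb
    neg_mem' := by
      intro a ha
      simp only [Set.mem_setOf_eq] at *
      rw [neg_pow, neg_one_pow_char_pow]
      linear_combination -ha }
  have h1 : Nat.card {y : F // y ^ p ^ e - y = 0} = Nat.card S := rfl
  have h2 : Nat.card S ∣ p ^ (e * m) := by
    rw [← hF', ← Nat.card_eq_fintype_card]
    exact AddSubgroup.card_addSubgroup_dvd_card S
  obtain ⟨j, hj, hKj⟩ := (Nat.dvd_prime_pow hpp).mp h2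
  have hK2 : 2 ≤ Nat.card S := by
    haveI : Nontrivial S := by
      refine ⟨⟨⟨0, ?_⟩, ⟨1, ?_⟩, ?_⟩⟩
      · show (0 : F) ^ p ^ e - 0 = 0
        simp [zero_pow (pow_ne_zero e hpp.ne_zero)]
      · show (1 : F) ^ p ^ e - 1 = 0
        simp
      · simp
    have : 1 < Nat.card S := Finite.one_lt_card_iff_nontrivial.mpr this
    omega
  have hj1 : j ≠ 0 := by
    rintro rfl
    rw [pow_zero] at hKj
    omega
  rw [h1, hKj]
  exact dvd_pow_self p hj1
open Finset

private lemma card_subtype_add_compl' {α : Type} [Fintype α] (P : α → Prop) :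
    Nat.card {x // P x} + Nat.card {x // ¬ P x} = Fintype.card α := by
  classical
  rw [Nat.card_eq_fintype_card, Nat.card_eq_fintype_card, Fintype.card_subtype_compl]
  have := Fintype.card_subtype_le P
  omega

private lemma partition_exists : ∀ (t n D : ℕ), 0 < t → t ≤ n → n ≤ t * D →
    ∃ g : Fin t → ℕ, (∑ c, g c) = n ∧ (∀ c, 1 ≤ g c) ∧ ∀ c, g c ≤ D := by
  intro t
  induction t with
  | zero => intro n D h; omega
  | succ t ih =>
    intro n D _ htn hnD
    have hD1 : 1 ≤ D := by nlinarith
    by_cases ht : t = 0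
    · subst ht
      refine ⟨fun _ => n, by simp, fun _ => by simpa using htn, fun _ => by simpa using hnD⟩
    · have ht' : 0 < t := Nat.pos_of_ne_zero ht
      have hsm : (t + 1) * D = t * D + D := by ring
      have h1 : t ≤ n - min D (n - t) := by omega
      have h2 : n - min D (n - t) ≤ t * D := by
        rcases le_or_gt D (n - t) with h | h
        · have hmin : min D (n - t) = D := by omega
          omega
        · have hmin : min D (n - t) = n - t := by omega
          rw [hmin]
          have h3 : n - (n - t) = t := by omega
          rw [h3]
          nlinarith
      obtain ⟨g, hg1, hg2, hg3⟩ := ih (n - min D (n - t)) D ht' h1 h2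
      refine ⟨Fin.cons (min D (n - t)) g, ?_, ?_, ?_⟩
      · rw [Fin.sum_cons, hg1]
        omega
      · intro c
        refine Fin.cases ?_ (fun i => ?_) c
        · simp only [Fin.cons_zero]
          omega
        · simpa using hg2 i
      · intro c
        refine Fin.cases ?_ (fun i => ?_) c
        · simp only [Fin.cons_zero]
          omega
        · simpa using hg3 i

section CardZero
variable {F : Type} [Field F] [Fintype F]

private lemma card_ne_zero_subtype : Nat.card {x : F // x ≠ 0} = Fintype.card F - 1 := by
  classical
  rw [Nat.card_eq_fintype_card, Fintype.card_subtype_compl, Fintype.card_subtype_eq]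

private lemma card_exists_zero (G : ℕ) :
    Nat.card {v : Fin G → F // ∃ i, v i = 0}
      = Fintype.card F ^ G - (Fintype.card F - 1) ^ G := by
  classical
  have e : {v : Fin G → F // ¬ ∃ i, v i = 0} ≃ (Fin G → {x : F // x ≠ 0}) :=
    { toFun := fun v i => ⟨v.1 i, fun h => v.2 ⟨i, h⟩⟩
      invFun := fun u => ⟨fun i => (u i).1, fun h => h.elim (fun i hi => (u i).2 hi)⟩
      left_inv := fun v => rfl
      right_inv := fun u => rfl }
  have h1 : Nat.card {v : Fin G → F // ¬ ∃ i, v i = 0} = (Fintype.card F - 1) ^ G := by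
    rw [Nat.card_congr e, Nat.card_eq_fintype_card, Fintype.card_fun,
      Fintype.card_subtype_compl, Fintype.card_subtype_eq, Fintype.card_fin]
  have h2 := card_subtype_add_compl' (fun v : Fin G → F => ∃ i, v i = 0)
  rw [h1, Fintype.card_fun, Fintype.card_fin] at h2
  exact Nat.eq_sub_of_add_eq h2

end CardZero
section PivotNe
open MvPolynomial Finset
variable {F : Type} [Field F] [Fintype F]

private lemma pivot_ne_zero {r : ℕ} (hr : 0 < r) {W : Type} (M : Fin r → MvPolynomial W F)
    (h1 : ∀ j, eval (fun _ => (1 : F)) (M j) = 1) :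
    (∑ j, X (Sum.inl j) * rename Sum.inr (M j)) ≠ 0 := by
  intro h
  classical
  set z : (Fin r ⊕ W) → F := Sum.elim (fun j : Fin r => if j = ⟨0, hr⟩ then (1 : F) else 0)
    (fun _ : W => 1) with hz
  have h2 := congrArg (eval z) h
  rw [map_zero, map_sum] at h2
  have hterm : ∀ j : Fin r, eval z (X (Sum.inl j) * rename Sum.inr (M j))
      = if j = ⟨0, hr⟩ then (1 : F) else 0 := by
    intro j
    rw [eval_mul, eval_X, eval_rename]
    have hcz : (z ∘ Sum.inr : W → F) = fun _ => 1 := rfl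
    rw [hcz, h1 j, mul_one]
    rfl
  rw [Finset.sum_congr rfl (fun j _ => hterm j)] at h2
  rw [Finset.sum_ite_eq' univ (⟨0, hr⟩ : Fin r) (fun _ => (1 : F))] at h2
  simp at h2

end PivotNe
section Final
open MvPolynomial Finset

private lemma val_le_of_not_dvd (p : ℕ) [Fact p.Prime] {a N : ℕ} (hN : N ≠ 0)
    (h : ¬ p ^ (a + 1) ∣ N) : padicValNat p N ≤ a := by
  by_contra hlt
  push_neg at hlt
  exact h ((pow_dvd_pow p hlt).trans pow_padicValNat_dvd)

private lemma final_val (p : ℕ) [Fact p.Prime] (a M' : ℕ) (hM : ¬ p ∣ M') :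
    padicValNat p (p ^ a * M') = a := by
  have hM0 : M' ≠ 0 := by rintro rfl; exact hM (dvd_zero p)
  rw [padicValNat.mul (pow_ne_zero a (Nat.Prime.ne_zero Fact.out)) hM0,
    padicValNat.prime_pow, padicValNat.eq_zero_of_not_dvd hM, add_zero]

set_option maxHeartbeats 1000000 in
/-- Let `p` be a prime, `q = p^e`, `m, k ≥ 1`, and let `d` be an
integer with `0 < d ≤ k(q^m−1)`.  Then there exists a homogeneous polynomial
`f ∈ 𝔽_{q^m}[x_1,…,x_k]` of degree `d` such that the `p`-adic valuation of
`N(f = y^q − y)` is at most `em⌈k/d⌉`. -/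
theorem stmt_8 (p e m k d : ℕ) [Fact p.Prime] (he : 1 ≤ e) (hm : 1 ≤ m) (hk : 1 ≤ k)
    (hd : 0 < d) (hd' : d ≤ k * ((p ^ e) ^ m - 1))
    (F : Type) [Field F] [Fintype F] (hF : Fintype.card F = (p ^ e) ^ m) :
    ∃ f : MvPolynomial (Fin k) F, f.IsHomogeneous d ∧ f ≠ 0 ∧
      Nat.card {xy : (Fin k → F) × F //
        MvPolynomial.eval xy.1 f = xy.2 ^ (p ^ e) - xy.2} ≠ 0 ∧
      padicValNat p (Nat.card {xy : (Fin k → F) × F //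
        MvPolynomial.eval xy.1 f = xy.2 ^ (p ^ e) - xy.2})
        ≤ e * m * ⌈(k : ℚ) / (d : ℚ)⌉₊ := by
  classical
  have hp : p.Prime := Fact.out
  haveI : Fact (1 < p) := ⟨hp.one_lt⟩
  haveI : NeZero p := ⟨hp.ne_zero⟩
  have hQcard : Fintype.card F = p ^ (e * m) := by rw [hF, ← pow_mul]
  have hem0 : e * m ≠ 0 := by positivity
  have castQ : ((Fintype.card F : ℕ) : ZMod p) = 0 := by
    rw [hQcard, Nat.cast_pow, ZMod.natCast_self, zero_pow hem0]
  have hKdvd : p ∣ Nat.card {y : F // y ^ p ^ e - y = 0} := p_dvd_K p e m he hm F hF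
  have castK : ((Nat.card {y : F // y ^ p ^ e - y = 0} : ℕ) : ZMod p) = 0 :=
    (ZMod.natCast_eq_zero_iff _ p).mpr hKdvd
  have hQ1 : 0 < Fintype.card F := Fintype.card_pos
  rcases Nat.lt_or_ge d 2 with hd2 | hd2
  · -- case d = 1
    have hd1 : d = 1 := by omega
    subst hd1
    have hr0 : (0 : ℕ) < 1 := Nat.one_pos
    have eV : (Fin 1 ⊕ Fin (k - 1)) ≃ Fin k := Fintype.equivFinOfCardEq (by
      simp only [Fintype.card_sum, Fintype.card_fin]
      omega)
    set M : Fin 1 → MvPolynomial (Fin (k - 1)) F := fun _ => 1 with hMdef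
    set f₀ : MvPolynomial (Fin 1 ⊕ Fin (k - 1)) F :=
      ∑ j : Fin 1, X (Sum.inl j) * rename Sum.inr (M j) with hf₀def
    have hcount : Nat.card {xy : (Fin k → F) × F //
        eval xy.1 (rename eV f₀) = xy.2 ^ p ^ e - xy.2} = p ^ (e * m * k) := by
      rw [NN_rename, hf₀def, NN_pivot (p ^ e) hr0 M]
      haveI : IsEmpty {w : Fin (k - 1) → F // ∀ j : Fin 1, eval w (M j) = 0} :=
        ⟨fun w => by have h1 := w.2 0; simp [hMdef] at h1⟩
      rw [Nat.card_of_isEmpty (α := {w : Fin (k - 1) → F // ∀ j : Fin 1, eval w (M j) = 0}),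
        mul_zero, add_zero]
      rw [Nat.card_congr (Equiv.subtypeUnivEquiv (fun w h => by
        have h1 := h 0; simp [hMdef] at h1))]
      rw [card_fun_eq, Fintype.card_fin, pow_one, ← pow_succ', hQcard, ← pow_mul]
      have hk1 : k - 1 + 1 = k := by omega
      rw [hk1]
    have hone : ∀ j : Fin 1, eval (fun _ : Fin (k - 1) => (1 : F)) (M j) = 1 := by
      intro j; simp [hMdef]
    refine ⟨rename eV f₀, ?_, ?_, ?_, ?_⟩
    · refine IsHomogeneous.rename_isHomogeneous ?_
      rw [hf₀def]
      refine IsHomogeneous.sum _ _ _ (fun j _ => ?_)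
      have h1 := (isHomogeneous_X F (Sum.inl j : Fin 1 ⊕ Fin (k - 1))).mul
        ((isHomogeneous_one (Fin (k - 1)) F).rename_isHomogeneous (f := Sum.inr))
      simpa [hMdef] using h1
    · intro h
      exact pivot_ne_zero hr0 M hone ((rename_injective _ eV.injective) (by rw [h, map_zero]))
    · rw [hcount]; exact pow_ne_zero _ hp.ne_zero
    · rw [hcount, padicValNat.prime_pow]
      have hceil : ⌈(k : ℚ) / ((1 : ℕ) : ℚ)⌉₊ = k := by
        rw [Nat.cast_one, div_one, Nat.ceil_natCast]
      rw [hceil]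
  rcases Nat.lt_or_ge k 2 with hk2 | hk2
  · -- case k = 1, d ≥ 2
    have hk1 : k = 1 := by omega
    subst hk1
    have hd0 : d ≠ 0 := by omega
    -- the count for coefficient c
    set NNc : F → ℕ := fun c => Nat.card {xy : (Fin 1 → F) × F //
      eval xy.1 (C c * X 0 ^ d) = xy.2 ^ p ^ e - xy.2} with hNNc
    -- total count over all c via count_core
    have hcore := count_core (F := F) (p ^ e) Nat.one_pos
      (fun (_ : Fin 1) (w : Fin 1 → F) => (w 0) ^ d)
    -- identify A' and Z'
    have hA' : Nat.card {w : Fin 1 → F // ¬ ∀ _j : Fin 1, (w 0) ^ d = 0}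
        = Fintype.card F - 1 := by
      have e1 : {w : Fin 1 → F // ¬ ∀ _j : Fin 1, (w 0) ^ d = 0} ≃ {x : F // x ≠ 0} :=
        { toFun := fun w => ⟨w.1 0, fun h => w.2 (fun _ => by rw [h, zero_pow hd0])⟩
          invFun := fun x => ⟨fun _ => x.1, fun h => x.2 (pow_eq_zero_iff hd0 |>.mp (h 0))⟩
          left_inv := fun w => Subtype.ext (funext fun i => by
            exact congrArg w.1 (Subsingleton.elim _ _))
          right_inv := fun x => rfl }
      rw [Nat.card_congr e1, card_ne_zero_subtype]
    have hZ' : Nat.card {w : Fin 1 → F // ∀ _j : Fin 1, (w 0) ^ d = 0} = 1 := by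
      have e2 : {w : Fin 1 → F // ∀ _j : Fin 1, (w 0) ^ d = 0} ≃ {x : F // x = 0} :=
        { toFun := fun w => ⟨w.1 0, pow_eq_zero_iff hd0 |>.mp (w.2 0)⟩
          invFun := fun x => ⟨fun _ => x.1, fun _ => by rw [x.2, zero_pow hd0]⟩
          left_inv := fun w => Subtype.ext (funext fun i => by
            exact congrArg w.1 (Subsingleton.elim _ _))
          right_inv := fun x => rfl }
      rw [Nat.card_congr e2, Nat.card_eq_fintype_card, Fintype.card_subtype_eq]
    rw [hA', hZ', mul_one, pow_one] at hcore
    -- sigma decomposition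
    have esig : (Σ c : F, {xy : (Fin 1 → F) × F //
          eval xy.1 (C c * X 0 ^ d) = xy.2 ^ p ^ e - xy.2})
        ≃ {z : ((Fin 1 → F) × (Fin 1 → F)) × F //
            (∑ j : Fin 1, z.1.1 j * (z.1.2 0) ^ d) = z.2 ^ p ^ e - z.2} :=
      { toFun := fun s => ⟨((fun _ => s.1, s.2.1.1), s.2.1.2), by
          have h := s.2.2
          simp only [eval_mul, eval_C, eval_pow, eval_X] at h
          simpa [Fin.sum_univ_one] using h⟩
        invFun := fun z => ⟨z.1.1.1 0, ⟨(z.1.1.2, z.1.2), by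
          have h := z.2
          simp only [Fin.sum_univ_one] at h
          simpa [eval_mul, eval_C, eval_pow, eval_X] using h⟩⟩
        left_inv := fun s => rfl
        right_inv := fun z => Subtype.ext (by
          have hz : (fun _ : Fin 1 => z.1.1.1 0) = z.1.1.1 :=
            funext fun i => congrArg z.1.1.1 (Subsingleton.elim _ _)
          show ((fun _ : Fin 1 => z.1.1.1 0, z.1.1.2), z.1.2) = z.1
          rw [hz]) }
    have hsplit : (∑ c : F, NNc c) = Fintype.card F * (Fintype.card F - 1)
        + Fintype.card F * Nat.card {y : F // y ^ p ^ e - y = 0} := by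
      rw [← hcore, ← Nat.card_congr esig, Nat.card_eq_fintype_card, Fintype.card_sigma]
      exact Finset.sum_congr rfl (fun c _ => Nat.card_eq_fintype_card)
    have hNN0 : NNc 0 = Fintype.card F * Nat.card {y : F // y ^ p ^ e - y = 0} := by
      have e3 : {xy : (Fin 1 → F) × F //
            eval xy.1 (C (0:F) * X 0 ^ d) = xy.2 ^ p ^ e - xy.2}
          ≃ (Fin 1 → F) × {y : F // y ^ p ^ e - y = 0} :=
        { toFun := fun s => (s.1.1, ⟨s.1.2, by
            have h := s.2; simp only [eval_mul, eval_C, zero_mul] at h; exact h.symm⟩)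
          invFun := fun z => ⟨(z.1, z.2.1), by
            simp only [eval_mul, eval_C, zero_mul]; exact z.2.2.symm⟩
          left_inv := fun s => rfl
          right_inv := fun z => rfl }
      simp only [hNNc]
      rw [Nat.card_congr e3, Nat.card_prod, card_fun_eq, Fintype.card_fin, pow_one]
    have hsum0 : (∑ c : F, NNc c) = NNc 0 + ∑ c ∈ ({0}ᶜ : Finset F), NNc c :=
      Fintype.sum_eq_add_sum_compl 0 NNc
    have hsum' : ∑ c ∈ ({0}ᶜ : Finset F), NNc c
        = Fintype.card F * (Fintype.card F - 1) := by
      refine Nat.add_left_cancel (n := NNc 0) ?_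
      rw [← hsum0, hsplit, hNN0]
      ring
    have hex : ∃ c ∈ ({0}ᶜ : Finset F), ¬ (p ^ (e * m + 1) ∣ NNc c) := by
      by_contra hc
      push_neg at hc
      have hdvdsum : p ^ (e * m + 1) ∣ Fintype.card F * (Fintype.card F - 1) := by
        rw [← hsum']
        exact Finset.dvd_sum hc
      rw [hQcard, pow_succ] at hdvdsum
      have h2 : p ∣ p ^ (e * m) - 1 :=
        (Nat.mul_dvd_mul_iff_left (pow_pos hp.pos (e * m))).mp hdvdsum
      have h3 : p ∣ p ^ (e * m) := dvd_pow_self p hem0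
      have h4 : p ∣ 1 := by
        have h5 : p ^ (e * m) - (p ^ (e * m) - 1) = 1 :=
          Nat.sub_sub_self (Nat.one_le_pow _ _ hp.pos)
        exact h5 ▸ Nat.dvd_sub h3 h2
      exact absurd (Nat.le_of_dvd one_pos h4) (not_le.mpr hp.one_lt)
    obtain ⟨c, hc0, hcdvd⟩ := hex
    have hcne : c ≠ 0 := by simpa using hc0
    have hNpos : NNc c ≠ 0 := by
      have : Nonempty {xy : (Fin 1 → F) × F //
          eval xy.1 (C c * X 0 ^ d) = xy.2 ^ p ^ e - xy.2} :=
        ⟨⟨(fun _ => 0, 0), by simp [zero_pow hd0, zero_pow (pow_ne_zero e hp.ne_zero)]⟩⟩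
      simp only [hNNc]
      exact Nat.card_pos.ne'
    refine ⟨C c * X 0 ^ d, isHomogeneous_C_mul_X_pow c 0 d, ?_, hNpos, ?_⟩
    · exact mul_ne_zero (fun h => hcne (by simpa using h)) (pow_ne_zero _ (X_ne_zero (0 : Fin 1)))
    · have hval : padicValNat p (NNc c) ≤ e * m := val_le_of_not_dvd p hNpos hcdvd
      have hceil : ⌈((1 : ℕ) : ℚ) / (d : ℚ)⌉₊ = 1 := by
        have h0 : (0 : ℚ) < ((1 : ℕ) : ℚ) / (d : ℚ) := by
          have : (0:ℚ) < (d:ℚ) := by exact_mod_cast hd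
          positivity
        have hle : ((1 : ℕ) : ℚ) / (d : ℚ) ≤ 1 := by
          rw [div_le_one (by exact_mod_cast hd)]
          exact_mod_cast hd
        exact le_antisymm (Nat.ceil_le.mpr (by simpa using hle)) (Nat.one_le_ceil_iff.mpr h0)
      rw [hceil, mul_one]
      exact hval
  · -- main case : d ≥ 2, k ≥ 2
    set r := ⌈(k : ℚ) / (d : ℚ)⌉₊ with hrdef
    have hdQ : (0 : ℚ) < (d : ℚ) := by exact_mod_cast hd
    have hr0 : 0 < r := Nat.one_le_ceil_iff.mpr (by
      have hkQ : (0 : ℚ) < (k : ℚ) := by exact_mod_cast hk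
      positivity)
    have hkrd : k ≤ r * d := by
      have h := Nat.le_ceil ((k : ℚ) / (d : ℚ))
      rw [div_le_iff₀ hdQ] at h
      exact_mod_cast h
    have hrk : r < k := by
      have h1 : r ≤ k - 1 := by
        apply Nat.ceil_le.mpr
        rw [div_le_iff₀ hdQ]
        have hc1 : ((k - 1 : ℕ) : ℚ) = (k : ℚ) - 1 := by
          have : (1 : ℕ) ≤ k := hk
          push_cast [this]
          ring
        rw [hc1]
        have h2k : (2 : ℚ) ≤ (k : ℚ) := by exact_mod_cast hk2
        have h2d : (2 : ℚ) ≤ (d : ℚ) := by exact_mod_cast hd2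
        nlinarith
      omega
    have hn1 : 1 ≤ k - r := by omega
    set t := min r (k - r) with htdef
    have ht1 : 0 < t := lt_min hr0 (by omega)
    have htn : t ≤ k - r := min_le_right _ _
    have hnt : k - r ≤ t * (d - 1) := by
      rcases le_total r (k - r) with h | h
      · rw [htdef, min_eq_left h]
        have hmul : r * (d - 1) + r = r * d := by
          have hd1 : d - 1 + 1 = d := by omega
          calc r * (d - 1) + r = r * ((d - 1) + 1) := by ring
          _ = r * d := by rw [hd1]
        omega
      · rw [htdef, min_eq_right h]
        have := Nat.mul_le_mul_left (k - r) (show 1 ≤ d - 1 by omega)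
        omega
    obtain ⟨g, hgsum, hg1, hgD⟩ := partition_exists t (k - r) (d - 1) ht1 htn hnt
    -- surjection from pivots onto groups
    have hcmem : ∀ j : Fin r, min j.1 (t - 1) < t := by  
      intro j
      omega
    set cF : Fin r → Fin t := fun j => ⟨min j.1 (t - 1), hcmem j⟩ with hcFdef
    have hcsurj : ∀ c₀ : Fin t, ∃ j : Fin r, cF j = c₀ := by
      intro c₀
      have hc1 : c₀.1 < t := c₀.2
      refine ⟨⟨c₀.1, by omega⟩, ?_⟩
      apply Fin.ext
      simp only [hcFdef]
      omega
    -- the monomials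
    set M : Fin r → MvPolynomial ((c₀ : Fin t) × Fin (g c₀)) F := fun j =>
      (∏ i : Fin (g (cF j)), X (⟨cF j, i⟩ : (c₀ : Fin t) × Fin (g c₀)))
        * X (⟨cF j, ⟨0, hg1 (cF j)⟩⟩ : (c₀ : Fin t) × Fin (g c₀)) ^ (d - 1 - g (cF j))
      with hMdef
    have heval : ∀ (j : Fin r) (w : ((c₀ : Fin t) × Fin (g c₀)) → F),
        eval w (M j) = (∏ i : Fin (g (cF j)), w ⟨cF j, i⟩)
          * w ⟨cF j, ⟨0, hg1 (cF j)⟩⟩ ^ (d - 1 - g (cF j)) := by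
      intro j w
      simp [hMdef]
    -- vanishing characterization
    have hZiff : ∀ w : ((c₀ : Fin t) × Fin (g c₀)) → F,
        (∀ j, eval w (M j) = 0) ↔ ∀ c₀ : Fin t, ∃ i : Fin (g c₀), w ⟨c₀, i⟩ = 0 := by
      intro w
      have hsingle : ∀ j : Fin r,
          (eval w (M j) = 0 ↔ ∃ i : Fin (g (cF j)), w ⟨cF j, i⟩ = 0) := by
        intro j
        rw [heval, mul_eq_zero]
        constructor
        · rintro (h | h)
          · obtain ⟨i, _, hi⟩ := Finset.prod_eq_zero_iff.mp h
            exact ⟨i, hi⟩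
          · exact ⟨⟨0, hg1 (cF j)⟩, (pow_eq_zero_iff' ).mp h |>.1⟩
        · rintro ⟨i, hi⟩
          exact Or.inl (Finset.prod_eq_zero (Finset.mem_univ i) hi)
      constructor
      · intro h c₀
        obtain ⟨j, hj⟩ := hcsurj c₀
        subst hj
        exact (hsingle j).mp (h j)
      · intro h j
        exact (hsingle j).mpr (h (cF j))
    -- product formula for Z
    have eP : {w : ((c₀ : Fin t) × Fin (g c₀)) → F // ∀ c₀ : Fin t, ∃ i : Fin (g c₀), w ⟨c₀, i⟩ = 0}
        ≃ ∀ c₀ : Fin t, {v : Fin (g c₀) → F // ∃ i, v i = 0} :=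
      { toFun := fun w c₀ => ⟨fun i => w.1 ⟨c₀, i⟩, w.2 c₀⟩
        invFun := fun u => ⟨fun s => (u s.1).1 s.2, fun c₀ => (u c₀).2⟩
        left_inv := fun w => Subtype.ext (funext fun s => by cases s; rfl)
        right_inv := fun u => rfl }
    have hZ : Nat.card {w : ((c₀ : Fin t) × Fin (g c₀)) → F // ∀ j, eval w (M j) = 0}
        = ∏ c₀ : Fin t, (Fintype.card F ^ (g c₀) - (Fintype.card F - 1) ^ (g c₀)) := by
      rw [Nat.card_congr ((Equiv.subtypeEquivRight hZiff).trans eP), Nat.card_pi]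
      exact Finset.prod_congr rfl (fun c₀ _ => card_exists_zero _)
    -- Z is nonzero mod p
    have castZ : ((Nat.card {w : ((c₀ : Fin t) × Fin (g c₀)) → F //
        ∀ j, eval w (M j) = 0} : ℕ) : ZMod p) ≠ 0 := by
      rw [hZ, Nat.cast_prod]
      refine Finset.prod_ne_zero_iff.mpr (fun c₀ _ => ?_)
      have hle : (Fintype.card F - 1) ^ (g c₀) ≤ Fintype.card F ^ (g c₀) :=
        Nat.pow_le_pow_left (Nat.sub_le _ _) _
      rw [Nat.cast_sub hle, Nat.cast_pow, Nat.cast_pow, castQ,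
        zero_pow (show g c₀ ≠ 0 by have := hg1 c₀; omega),
        Nat.cast_sub hQ1, Nat.cast_one, castQ, zero_sub, zero_sub]
      exact neg_ne_zero.mpr (pow_ne_zero _ (neg_ne_zero.mpr one_ne_zero))
    -- A + Z = Q ^ (k - r)
    have hAZ : Nat.card {w : ((c₀ : Fin t) × Fin (g c₀)) → F // ∀ j, eval w (M j) = 0}
        + Nat.card {w : ((c₀ : Fin t) × Fin (g c₀)) → F // ¬ ∀ j, eval w (M j) = 0}
        = Fintype.card F ^ (k - r) := by
      rw [card_subtype_add_compl]
      rw [Fintype.card_fun]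
      congr 1
      rw [Fintype.card_sigma]
      simpa using hgsum
    -- the multiplier
    set Mlt : ℕ := Nat.card {w : ((c₀ : Fin t) × Fin (g c₀)) → F // ¬ ∀ j, eval w (M j) = 0}
      + Nat.card {y : F // y ^ p ^ e - y = 0}
        * Nat.card {w : ((c₀ : Fin t) × Fin (g c₀)) → F // ∀ j, eval w (M j) = 0} with hMlt
    have castMlt : ((Mlt : ℕ) : ZMod p) ≠ 0 := by
      have hcastAZ := congrArg (fun x : ℕ => (x : ZMod p)) hAZ
      push_cast at hcastAZ
      rw [castQ, zero_pow (by omega : k - r ≠ 0)] at hcastAZ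
      have hA : ((Nat.card {w : ((c₀ : Fin t) × Fin (g c₀)) → F //
          ¬ ∀ j, eval w (M j) = 0} : ℕ) : ZMod p)
          = - ((Nat.card {w : ((c₀ : Fin t) × Fin (g c₀)) → F //
            ∀ j, eval w (M j) = 0} : ℕ) : ZMod p) :=
        eq_neg_of_add_eq_zero_right hcastAZ
      rw [hMlt]
      push_cast
      rw [hA, castK, zero_mul, add_zero]
      exact neg_ne_zero.mpr castZ
    have hMlt0 : Mlt ≠ 0 := fun h => castMlt (by rw [h, Nat.cast_zero])
    have hpMlt : ¬ p ∣ Mlt := fun h => castMlt ((ZMod.natCast_eq_zero_iff _ p).mpr h)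
    -- the polynomial
    have eV : (Fin r ⊕ ((c₀ : Fin t) × Fin (g c₀))) ≃ Fin k := Fintype.equivFinOfCardEq (by
      simp only [Fintype.card_sum, Fintype.card_fin, Fintype.card_sigma]
      rw [hgsum]
      omega)
    set f₀ : MvPolynomial (Fin r ⊕ ((c₀ : Fin t) × Fin (g c₀))) F :=
      ∑ j : Fin r, X (Sum.inl j) * rename Sum.inr (M j) with hf₀def
    have hcount : Nat.card {xy : (Fin k → F) × F //
        eval xy.1 (rename eV f₀) = xy.2 ^ p ^ e - xy.2} = p ^ (e * m * r) * Mlt := by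
      rw [NN_rename, hf₀def, NN_pivot (p ^ e) hr0 M, hMlt]
      rw [hQcard, ← pow_mul]
      ring
    have hone : ∀ j : Fin r,
        eval (fun _ : ((c₀ : Fin t) × Fin (g c₀)) => (1 : F)) (M j) = 1 := by
      intro j
      rw [heval]
      simp
    refine ⟨rename eV f₀, ?_, ?_, ?_, ?_⟩
    · refine IsHomogeneous.rename_isHomogeneous ?_
      rw [hf₀def]
      refine IsHomogeneous.sum _ _ _ (fun j _ => ?_)
      have hMhom : (M j).IsHomogeneous (d - 1) := by
        rw [hMdef]
        have h1 : (∏ i : Fin (g (cF j)),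
            (X (⟨cF j, i⟩ : (c₀ : Fin t) × Fin (g c₀)) : MvPolynomial _ F)).IsHomogeneous
              (g (cF j)) := by
          have h0 := IsHomogeneous.prod Finset.univ
            (fun i : Fin (g (cF j)) => (X (⟨cF j, i⟩ : (c₀ : Fin t) × Fin (g c₀)) :
              MvPolynomial _ F)) (fun _ => 1) (fun i _ => isHomogeneous_X _ _)
          simpa using h0
        have h2 := h1.mul (isHomogeneous_X_pow
          (⟨cF j, ⟨0, hg1 (cF j)⟩⟩ : (c₀ : Fin t) × Fin (g c₀)) (d - 1 - g (cF j)))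
        have h4 : g (cF j) + (d - 1 - g (cF j)) = d - 1 := by
          have := hgD (cF j)
          omega
        rwa [h4] at h2
      have h5 := (isHomogeneous_X F (Sum.inl j : Fin r ⊕ ((c₀ : Fin t) × Fin (g c₀)))).mul
        (hMhom.rename_isHomogeneous (f := Sum.inr))
      have h6 : 1 + (d - 1) = d := by omega
      rwa [h6] at h5
    · intro h
      exact pivot_ne_zero hr0 M hone ((rename_injective _ eV.injective) (by rw [h, map_zero]))
    · rw [hcount]
      exact mul_ne_zero (pow_ne_zero _ hp.ne_zero) hMlt0
    · rw [hcount, final_val p (e * m * r) Mlt hpMlt]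

end Final
end

section
/- Let p be a prime and q = p^e. Let M_0 = (T(a)^r)_{r ∈ [0,q−1], a ∈ 𝔽_q} be the q × q matrix over ℤ_p[ξ_{q−1}] whose rows are indexed by r ∈ {0,1,…,q−1} and columns by a ∈ 𝔽_q, and let M = M_0^{⊗k} be its k-th tensor (Kronecker) power. Then for every vector x with entries in ℚ_p(ξ_{p(q−1)}) and y = Mx, one has ν_p(y) = ν_p(x), where the p-adic valuation of a vector is the minimum of the p-adic valuations of its entries. -/
/-!
Both `M` and a left inverse of `M` have entries of nonnegative valuation, so multiplication by
either one cannot lower the valuation of a vector. `M` is the `k`-th Kronecker power of the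
transposed Vandermonde matrix `(T(a)^r)`, whose left inverse is the matrix of coefficients of the
Lagrange basis polynomials on the nodes `T(a)`. These coefficients are integral because the nodes
are integral and their differences are units: `T(a) - T(b) ≡ T(a - b)` modulo the maximal ideal,
and `T(a - b)` is a root of unity for `a ≠ b`.
-/

open Finset Polynomial

namespace AddValuation

variable {R Γ₀ : Type*} [Ring R] [LinearOrderedAddCommMonoidWithTop Γ₀] (v : AddValuation R Γ₀)

def integer : Subring R where
  carrier := {x | 0 ≤ v x}
  mul_mem' {x y} hx hy := show 0 ≤ v (x * y) by rw [v.map_mul]; exact add_nonneg hx hy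
  one_mem' := by simp
  add_mem' hx hy := v.map_le_add hx hy
  zero_mem' := by simp
  neg_mem' := by simp

@[simp]
theorem mem_integer {x : R} : x ∈ v.integer ↔ 0 ≤ v x := Iff.rfl

variable {v}

theorem inf_le_map_mulVec {m n : Type*} [Fintype m] [Fintype n] {A : Matrix m n R}
    (hA : ∀ i j, A i j ∈ v.integer) (x : n → R) (i : m) :
    univ.inf (fun j => v (x j)) ≤ v (A.mulVec x i) :=
  v.map_le_sum fun j _ => calc
    univ.inf (fun j => v (x j)) ≤ v (x j) := inf_le (mem_univ j)
    _ ≤ v (A i j) + v (x j) := le_add_of_nonneg_left (hA i j)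
    _ = v (A i j * x j) := (v.map_mul _ _).symm

theorem inf_map_mulVec_eq {m n : Type*} [Fintype m] [Fintype n] [DecidableEq n]
    {A : Matrix m n R} {B : Matrix n m R} (hA : ∀ i j, A i j ∈ v.integer)
    (hB : ∀ i j, B i j ∈ v.integer) (hBA : B * A = 1) (x : n → R) :
    univ.inf (fun i => v (A.mulVec x i)) = univ.inf (fun j => v (x j)) := by
  refine le_antisymm (Finset.le_inf fun j _ => ?_)
    (Finset.le_inf fun i _ => inf_le_map_mulVec hA x i)
  calc univ.inf (fun i => v (A.mulVec x i)) ≤ v (B.mulVec (A.mulVec x) j) :=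
        inf_le_map_mulVec hB _ j
    _ = v (x j) := by rw [Matrix.mulVec_mulVec, hBA, Matrix.one_mulVec]

theorem map_eq_zero_of_pow_eq_one {Γ : Type*} [AddCommGroup Γ] [LinearOrder Γ]
    [IsOrderedAddMonoid Γ] (v : AddValuation R (WithTop Γ)) {u : R} {m : ℕ}
    (hm : m ≠ 0) (hu : u ^ m = 1) : v u = 0 := by
  have hne : v u ≠ ⊤ := by
    have hunit : v u + v (u ^ (m - 1)) = 0 := by
      rw [← v.map_mul, ← pow_succ', Nat.sub_add_cancel (Nat.one_le_iff_ne_zero.mpr hm), hu,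
        v.map_one]
    intro h
    rw [h, top_add] at hunit
    exact WithTop.top_ne_zero hunit
  lift v u to Γ using hne with a ha
  have h := v.map_pow u m
  rw [hu, v.map_one, ← ha, ← WithTop.coe_nsmul] at h
  have : m • a = 0 := by exact_mod_cast h.symm
  simpa [hm] using this

section Field

variable {K Γ : Type*} [Field K] [AddCommGroup Γ] [LinearOrder Γ] [IsOrderedAddMonoid Γ]
  (v : AddValuation K (WithTop Γ))

theorem map_eq_zero_of_pow_eq_self {u : K} (hu : u ≠ 0) {q : ℕ} (hq : 1 < q) (huq : u ^ q = u) :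
    v u = 0 :=
  v.map_eq_zero_of_pow_eq_one (Nat.sub_ne_zero_of_lt hq) <| mul_right_cancel₀ hu <| by
    rw [← pow_succ, Nat.sub_add_cancel hq.le, huq, one_mul]

theorem map_sub_eq_zero_of_map_add_pos {F : Type*} [AddGroup F] {T : F → K}
    (hT : ∀ c, c ≠ 0 → v (T c) = 0) (hadd : ∀ x y, 0 < v (T (x + y) - T x - T y)) {a b : F}
    (hab : a ≠ b) : v (T a - T b) = 0 := by
  have hab' := hT (a - b) (sub_ne_zero_of_ne hab)
  have hcongr := hadd (a - b) b
  rw [sub_add_cancel] at hcongr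
  rw [show T a - T b = T (a - b) + (T a - T (a - b) - T b) by ring,
    v.map_add_eq_of_lt_left (hab' ▸ hcongr), hab']

end Field

end AddValuation

theorem Lagrange.coeff_basis_mem {K ι : Type*} [Field K] [DecidableEq ι] (S : Subring K)
    {s : Finset ι} {T : ι → K} {i : ι} (hT : ∀ j ∈ s, T j ∈ S)
    (hTsub : ∀ j ∈ s, j ≠ i → (T i - T j)⁻¹ ∈ S) (n : ℕ) :
    (Lagrange.basis s T i).coeff n ∈ S := by
  suffices Lagrange.basis s T i ∈ liftsRing S.subtype by
    simpa using (lifts_iff_coeff_lifts _).mp ((lifts_iff_liftsRing _ _).mpr this) n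
  have hC : ∀ c ∈ S, C c ∈ liftsRing S.subtype := fun c hc =>
    (lifts_iff_liftsRing _ _).mp (C_mem_lifts S.subtype ⟨c, hc⟩)
  refine Subring.prod_mem _ fun j hj => ?_
  obtain ⟨hji, hjs⟩ := mem_erase.mp hj
  exact mul_mem (hC _ (hTsub j hjs hji))
    (sub_mem ((lifts_iff_liftsRing _ _).mp (X_mem_lifts _)) (hC _ (hT j hjs)))

theorem Lagrange.coeff_basis_mul_pow {K ι : Type*} [Field K] [Fintype ι] [DecidableEq ι]
    {T : ι → K} (hT : Function.Injective T) {q : ℕ} (hq : Fintype.card ι ≤ q) :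
    Matrix.of (fun a (r : Fin q) => (Lagrange.basis univ T a).coeff r) *
      Matrix.of (fun (r : Fin q) a => T a ^ (r : ℕ)) = 1 := by
  ext a c
  have hdeg : (Lagrange.basis univ T a).natDegree < q := by
    rw [Lagrange.natDegree_basis hT.injOn (mem_univ a), card_univ]
    have := Fintype.card_pos_iff.mpr ⟨a⟩
    omega
  rw [Matrix.mul_apply, Matrix.one_apply]
  simp only [Matrix.of_apply]
  rw [Fin.sum_univ_eq_sum_range (fun j => (Lagrange.basis univ T a).coeff j * T c ^ j),
    ← eval_eq_sum_range' hdeg]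
  split_ifs with hac
  · rw [hac, Lagrange.eval_basis_self hT.injOn (mem_univ c)]
  · exact Lagrange.eval_basis_of_ne hac (mem_univ c)

namespace Matrix

variable {l m n α : Type*}

def piKronecker (ι : Type*) [Fintype ι] [CommMonoid α] (A : Matrix m n α) :
    Matrix (ι → m) (ι → n) α :=
  of fun r a => ∏ i, A (r i) (a i)

variable {ι : Type*} [Fintype ι]

theorem piKronecker_mul [CommSemiring α] [DecidableEq ι] [Fintype m] (A : Matrix l m α)
    (B : Matrix m n α) : piKronecker ι A * piKronecker ι B = piKronecker ι (A * B) := by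
  ext r c
  simp only [piKronecker, mul_apply, of_apply]
  rw [prod_univ_sum, Fintype.piFinset_univ]
  simp only [prod_mul_distrib]

theorem piKronecker_one [CommSemiring α] [DecidableEq m] :
    piKronecker ι (1 : Matrix m m α) = 1 := by
  ext r c
  simp [piKronecker, one_apply, prod_boole, funext_iff]

theorem piKronecker_mem {R : Type*} [CommRing R] {S : Subring R} {A : Matrix m n R}
    (hA : ∀ i j, A i j ∈ S) (r : ι → m) (a : ι → n) : piKronecker ι A r a ∈ S :=
  S.prod_mem fun i _ => hA (r i) (a i)

end Matrix

theorem stmt_10_general (p e k : ℕ) [Fact p.Prime]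
    (F : Type) [Field F] [Fintype F] (hF : Fintype.card F = p ^ e)
    (ν : CyclotomicField (p * (p ^ e - 1)) ℚ_[p] → WithTop ℚ)
    (hν_mul : ∀ x y, ν (x * y) = ν x + ν y)
    (hν_add : ∀ x y, min (ν x) (ν y) ≤ ν (x + y))
    (hν_top : ∀ x, ν x = ⊤ ↔ x = 0)
    (T : F → CyclotomicField (p * (p ^ e - 1)) ℚ_[p])
    (hT0 : T 0 = 0)
    (hTq : ∀ x, T x ^ (p ^ e) = T x)
    (hTinj : Function.Injective T)
    (hTadd : ∀ x y, (0 : WithTop ℚ) < ν (T (x + y) - T x - T y))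
    (M : Matrix (Fin k → Fin (p ^ e)) (Fin k → F)
        (CyclotomicField (p * (p ^ e - 1)) ℚ_[p]))
    (hM : ∀ r a, M r a = ∏ i, T (a i) ^ ((r i : ℕ)))
    (x : (Fin k → F) → CyclotomicField (p * (p ^ e - 1)) ℚ_[p]) :
    Finset.univ.inf (fun r => ν (M.mulVec x r)) = Finset.univ.inf (fun a => ν (x a)) := by
  classical
  have hq : 1 < p ^ e := hF ▸ Fintype.one_lt_card
  have hν1 : ν 1 = 0 :=
    WithTop.add_left_cancel ((hν_top 1).not.mpr one_ne_zero) (by rw [← hν_mul, one_mul, add_zero])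
  let v := AddValuation.of ν ((hν_top 0).mpr rfl) hν1 hν_add hν_mul
  have hT_unit : ∀ a, a ≠ 0 → v (T a) = 0 := fun a ha =>
    v.map_eq_zero_of_pow_eq_self (hT0 ▸ hTinj.ne ha) hq (hTq a)
  have hT_int : ∀ a, T a ∈ v.integer := fun a => by
    rcases eq_or_ne a 0 with rfl | ha
    · simp [hT0]
    · simp [hT_unit a ha]
  have hT_sub : ∀ a b, a ≠ b → (T a - T b)⁻¹ ∈ v.integer := fun a b hab => by
    simp [v.map_sub_eq_zero_of_map_add_pos hT_unit hTadd hab]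
  have hM_eq : M = Matrix.piKronecker (Fin k) (.of fun (r : Fin (p ^ e)) a => T a ^ (r : ℕ)) :=
    Matrix.ext hM
  have hM_int : ∀ r a, M r a ∈ v.integer := fun r a =>
    hM r a ▸ Subring.prod_mem _ fun i _ => pow_mem (hT_int _) _
  let N₀ : Matrix F (Fin (p ^ e)) (CyclotomicField (p * (p ^ e - 1)) ℚ_[p]) :=
    .of fun a r => (Lagrange.basis univ T a).coeff r
  have hN₀_int : ∀ a r, N₀ a r ∈ v.integer := fun a r =>
    Lagrange.coeff_basis_mem _ (fun b _ => hT_int b) (fun b _ hba => hT_sub a b hba.symm) r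
  refine v.inf_map_mulVec_eq hM_int (Matrix.piKronecker_mem hN₀_int) ?_ x
  rw [hM_eq, Matrix.piKronecker_mul, Lagrange.coeff_basis_mul_pow hTinj hF.le,
    Matrix.piKronecker_one]

/-- Let `p` be a prime and `q = p^e`.  Let `M₀ = (T(a)^r)` be the
`q × q` matrix over `ℤ_p[ξ_{q−1}] ⊆ ℚ_p(ξ_{p(q−1)})` with rows indexed by
`r ∈ [0,q−1]` and columns by `a ∈ 𝔽_q`, where `T` is the Teichmüller lift, and let
`M = M₀^{⊗k}` be its `k`-th tensor power (rows indexed by `[0,q−1]^k`, columns by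
`𝔽_q^k`, entry `∏_i T(a_i)^{r_i}`).  Then for every vector `x` over
`ℚ_p(ξ_{p(q−1)})` and `y = Mx`, one has `ν_p(y) = ν_p(x)`, where the `p`-adic
valuation of a vector is the minimum of the valuations of its entries.

Here `ℚ_p(ξ_{p(q−1)})` is realized as `CyclotomicField (p(q−1)) ℚ_[p]`; the
(unique) extension `ν` of the `p`-adic valuation is axiomatized by the hypotheses
`hν_*`, and the Teichmüller lift `T` is axiomatized by the hypotheses `hT*`
(a multiplicative injective section of the residue map whose values are roots of
`X^q − X`). -/
theorem stmt_10 (p e k : ℕ) [Fact p.Prime] (he : 1 ≤ e)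
    (hpos : 0 < p * (p ^ e - 1))
    (F : Type) [Field F] [Fintype F] (hF : Fintype.card F = p ^ e)
    (ν : CyclotomicField (p * (p ^ e - 1)) ℚ_[p] → WithTop ℚ)
    (hν_mul : ∀ x y, ν (x * y) = ν x + ν y)
    (hν_add : ∀ x y, min (ν x) (ν y) ≤ ν (x + y))
    (hν_top : ∀ x, ν x = ⊤ ↔ x = 0)
    (hν_ext : ∀ a : ℚ_[p], a ≠ 0 →
      ν (algebraMap ℚ_[p] (CyclotomicField (p * (p ^ e - 1)) ℚ_[p]) a)
        = ((a.valuation : ℚ) : WithTop ℚ))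
    (T : F → CyclotomicField (p * (p ^ e - 1)) ℚ_[p])
    (hT0 : T 0 = 0)
    (hTmul : ∀ x y, T (x * y) = T x * T y)
    (hTq : ∀ x, T x ^ (p ^ e) = T x)
    (hTinj : Function.Injective T)
    (hTadd : ∀ x y, (0 : WithTop ℚ) < ν (T (x + y) - T x - T y))
    (M : Matrix (Fin k → Fin (p ^ e)) (Fin k → F)
        (CyclotomicField (p * (p ^ e - 1)) ℚ_[p]))
    (hM : ∀ r a, M r a = ∏ i, T (a i) ^ ((r i : ℕ)))
    (x : (Fin k → F) → CyclotomicField (p * (p ^ e - 1)) ℚ_[p]) :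
    Finset.univ.inf (fun r => ν (M.mulVec x r)) = Finset.univ.inf (fun a => ν (x a)) :=
  stmt_10_general p e k F hF ν hν_mul hν_add hν_top T hT0 hTq hTinj hTadd M hM x
end

section
/- Let p be a prime, q = p^e, m ≥ 1, and let G = (g_{ij}), 1 ≤ i ≤ k, 1 ≤ j ≤ n, be a matrix over 𝔽_{q^m}. For α = (α_1,…,α_k) ∈ 𝔽_{q^m}^k let c(α) = ( Tr_{q^m/q}( ∑_{i=1}^k α_i g_{ij} ) )_{1 ≤ j ≤ n} ∈ 𝔽_q^n. Then the Hamming weight of c(α), viewed as an element of ℚ_p(ξ_{p(q^m−1)}), satisfies wt(c(α)) = −((q−1)/q) ∑_{r ∈ R} ( ∏_{i=1}^k λ_{r_i} ) ( ∑_{j=1}^n ∏_{i=1}^k T(g_{ij})^{r_i} ) ( ∏_{i=1}^k T(α_i)^{r_i} ), where R = { r = (r_1,…,r_k) ∈ [0, q^m−1]^k : r_1+⋯+r_k ≡ 0 (mod q−1) and r_1+⋯+r_k > 0 }. -/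
/-!
The additive character `ψ x = ξ_p ^ Tr x` of `𝔽_{q^m}` expands in powers of the Teichmüller
character, `ψ x = ∑_{i < q^m} λ_i T(x)^i`: this is Fourier inversion on `𝔽_{q^m}ˣ`, i.e.
orthogonality of the powers of `T`. The coordinate `c_j = Tr_{q^m/q}(∑ α_i g_ij)` vanishes iff
`∑_{y ∈ 𝔽_q} ψ(y ∑ α_i g_ij) = q`, and otherwise this sum is `0`. Expanding every factor
`ψ(y α_i g_ij)` turns the sum into `∑_r (∏ λ_{r_i} T(α_i g_ij)^{r_i}) ∑_y T(y)^{∑ r_i}`, and the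
inner sum over `𝔽_q` is `q` for `∑ r_i = 0`, `q - 1` when `q - 1 ∣ ∑ r_i > 0`, and `0` otherwise.
Summing `1 - [c_j = 0]` over `j` gives the weight.
-/

open Finset

def MonoidWithZeroHom.ofInjective {M₀ N₀ : Type*} [MonoidWithZero M₀] [Nontrivial M₀]
    [MonoidWithZero N₀] [IsLeftCancelMulZero N₀] (f : M₀ → N₀) (h0 : f 0 = 0)
    (hmul : ∀ x y, f (x * y) = f x * f y) (hf : Function.Injective f) : M₀ →*₀ N₀ where
  toFun := f
  map_zero' := h0
  map_one' := by
    have h1 : f 1 ≠ 0 := fun h => one_ne_zero (hf (h.trans h0.symm))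
    exact mul_left_cancel₀ h1 (by rw [← hmul, mul_one, mul_one])
  map_mul' := hmul

theorem AddChar.map_sum_eq_prod {ι A M : Type*} [AddCommMonoid A] [CommMonoid M]
    (ψ : AddChar A M) (s : Finset ι) (a : ι → A) : ψ (∑ i ∈ s, a i) = ∏ i ∈ s, ψ (a i) := by
  classical
  induction s using Finset.induction_on with
  | empty => simp
  | insert i s hi ih => rw [sum_insert hi, prod_insert hi, AddChar.map_add_eq_mul, ih]

theorem MonoidWithZeroHom.sum_pow_eq_ite {F K : Type*} [Field F] [Fintype F] [Field K]
    (χ : F →*₀ K) (hχ : Function.Injective χ) (S : ℕ) :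
    ∑ y : F, χ y ^ S = if S = 0 then (Fintype.card F : K)
      else if Fintype.card F - 1 ∣ S then ((Fintype.card F - 1 : ℕ) : K) else 0 := by
  classical
  rcases eq_or_ne S 0 with rfl | hS
  · simp
  let f : Fˣ →* K := (powMonoidHom S).comp ((χ : F →* K).comp (Units.coeHom F))
  have hf : f = 1 ↔ Fintype.card F - 1 ∣ S := by
    rw [← FiniteField.forall_pow_eq_one_iff, DFunLike.ext_iff]
    refine forall_congr' fun u => ?_
    show χ (u : F) ^ S = 1 ↔ u ^ S = 1
    rw [← map_pow, ← map_one χ, hχ.eq_iff, Units.ext_iff, Units.val_pow_eq_pow_val, Units.val_one]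
  have hunits : ∑ y : F, χ y ^ S = ∑ u : Fˣ, f u := by
    rw [Fintype.sum_eq_add_sum_compl 0, map_zero, zero_pow hS, zero_add,
      sum_subtype _ (p := (· ≠ 0)) (by simp)]
    exact Fintype.sum_equiv unitsEquivNeZero.symm _ _ fun _ => rfl
  rw [if_neg hS, hunits, sum_hom_units f, Fintype.card_units]
  simp only [hf]
  push_cast
  rfl

section TraceChar

variable {K : Type*} [Field K] {p : ℕ} [Fact p.Prime] {ξ : K} (hξ : IsPrimitiveRoot ξ p)

noncomputable def traceChar (F : Type*) [Field F] [Algebra (ZMod p) F] : AddChar F K :=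
  (AddChar.zmodChar p hξ.pow_eq_one).compAddMonoidHom (Algebra.trace (ZMod p) F).toAddMonoidHom

theorem traceChar_apply (F : Type*) [Field F] [Algebra (ZMod p) F] (x : F) :
    traceChar hξ F x = ξ ^ (Algebra.trace (ZMod p) F x).val := rfl

theorem traceChar_ne_one (F : Type*) [Field F] [Finite F] [Algebra (ZMod p) F] :
    traceChar hξ F ≠ 1 := by
  have := Fintype.ofFinite F
  obtain ⟨x, hx⟩ := Algebra.trace_surjective (ZMod p) F 1
  refine AddChar.ne_one_iff.2 ⟨x, ?_⟩
  rw [traceChar_apply, hx, ZMod.val_one]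
  exact hξ.pow_ne_one_of_pos_of_lt one_ne_zero (Fact.out : p.Prime).one_lt

theorem sum_traceChar_algebraMap_mul (Fq Fqm : Type*) [Field Fq] [Field Fqm] [Fintype Fq]
    [DecidableEq Fq] [Finite Fqm] [Algebra (ZMod p) Fq] [Algebra (ZMod p) Fqm] [Algebra Fq Fqm]
    [IsScalarTower (ZMod p) Fq Fqm] (s : Fqm) :
    ∑ y : Fq, traceChar hξ Fqm (algebraMap Fq Fqm y * s)
      = if Algebra.trace Fq Fqm s = 0 then (Fintype.card Fq : K) else 0 := by
  have hψ := AddChar.IsPrimitive.of_ne_one (traceChar_ne_one hξ Fq)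
  calc ∑ y : Fq, traceChar hξ Fqm (algebraMap Fq Fqm y * s)
      = ∑ y : Fq, traceChar hξ Fq (y * Algebra.trace Fq Fqm s) := by
        refine sum_congr rfl fun y _ => ?_
        rw [traceChar_apply, traceChar_apply, ← Algebra.trace_trace (S := Fq),
          ← Algebra.smul_def, map_smul, smul_eq_mul]
    _ = _ := by rw [AddChar.sum_mulShift _ hψ]; push_cast; rfl

end TraceChar

section Expansion

variable {F K : Type*} [Field F] [Fintype F] [DecidableEq F] [Field K]

/-- The Gauss sum `g(χ⁻ⁱ)`. -/
noncomputable def gaussCoeff (ψ : AddChar F K) (χ : F →*₀ K) (i : ℕ) : K :=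
  ∑ x ∈ univ \ {0}, ψ x * (χ x)⁻¹ ^ i

/-- The coefficients `λ_i`. At `i = 0` the Gauss sum `-1` of the trivial character is replaced
by `1`; the difference is compensated at `i = q - 1`, where `χ x ^ (q - 1) = 1` for `x ≠ 0`,
so that the expansion also holds at `x = 0`. -/
noncomputable def teichmullerCoeff (ψ : AddChar F K) (χ : F →*₀ K) (i : ℕ) : K :=
  if i = 0 then 1 else if i = Fintype.card F - 1
    then -(Fintype.card F : K) * ((Fintype.card F - 1 : ℕ) : K)⁻¹
    else gaussCoeff ψ χ i * ((Fintype.card F - 1 : ℕ) : K)⁻¹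

theorem AddChar.sum_sdiff_zero_eq_neg_one {ψ : AddChar F K} (hψ : ψ ≠ 1) :
    ∑ x ∈ univ \ {0}, ψ x = -1 := by
  have h := AddChar.sum_eq_zero_of_ne_one hψ
  rw [sum_eq_sum_sdiff_singleton_add (mem_univ 0), AddChar.map_zero_eq_one] at h
  exact eq_neg_of_add_eq_zero_left h

theorem MonoidWithZeroHom.sum_range_pow_mul_inv {χ : F →*₀ K} (hχ : Function.Injective χ)
    {x z : F} (hx : x ≠ 0) (hz : z ≠ 0) :
    ∑ i ∈ range (Fintype.card F - 1), (χ x * (χ z)⁻¹) ^ i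
      = if x = z then ((Fintype.card F - 1 : ℕ) : K) else 0 := by
  split_ifs with hxz
  · rw [hxz, mul_inv_cancel₀ ((map_ne_zero χ).2 hz)]
    simp
  · have hne : χ x * (χ z)⁻¹ ≠ 1 := by
      rwa [Ne, mul_inv_eq_one₀ ((map_ne_zero χ).2 hz), hχ.eq_iff]
    rw [geom_sum_eq hne, mul_pow, inv_pow, ← map_pow, ← map_pow,
      FiniteField.pow_card_sub_one_eq_one x hx, FiniteField.pow_card_sub_one_eq_one z hz]
    simp

theorem sum_gaussCoeff_mul_pow (ψ : AddChar F K) {χ : F →*₀ K} (hχ : Function.Injective χ)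
    {x : F} (hx : x ≠ 0) :
    ∑ i ∈ range (Fintype.card F - 1), gaussCoeff ψ χ i * χ x ^ i
      = ((Fintype.card F - 1 : ℕ) : K) * ψ x := by
  calc ∑ i ∈ range (Fintype.card F - 1), gaussCoeff ψ χ i * χ x ^ i
      = ∑ z ∈ univ \ {0}, ψ z * ∑ i ∈ range (Fintype.card F - 1), (χ x * (χ z)⁻¹) ^ i := by
        simp only [gaussCoeff, sum_mul, mul_sum]
        rw [sum_comm]
        exact sum_congr rfl fun z _ => sum_congr rfl fun i _ => by ring
    _ = ∑ z ∈ univ \ {0}, ψ z * if x = z then ((Fintype.card F - 1 : ℕ) : K) else 0 :=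
        sum_congr rfl fun z hz => by
          rw [MonoidWithZeroHom.sum_range_pow_mul_inv hχ hx (by simpa using hz)]
    _ = _ := by simp [hx, mul_comm]

theorem AddChar.eq_sum_teichmullerCoeff_mul_pow {ψ : AddChar F K} (hψ : ψ ≠ 1)
    {χ : F →*₀ K} (hχ : Function.Injective χ) (hQ : ((Fintype.card F - 1 : ℕ) : K) ≠ 0)
    (x : F) : ψ x = ∑ i ∈ range (Fintype.card F), teichmullerCoeff ψ χ i * χ x ^ i := by
  rcases eq_or_ne x 0 with rfl | hx
  · rw [sum_eq_single_of_mem 0 (mem_range.2 Fintype.card_pos) fun i _ hi => by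
      rw [map_zero, zero_pow hi, mul_zero]]
    simp [teichmullerCoeff]
  have hQ1 : 1 < Fintype.card F := Fintype.one_lt_card
  have hlow : ∑ i ∈ range (Fintype.card F - 1), teichmullerCoeff ψ χ i * χ x ^ i
      = ((Fintype.card F - 1 : ℕ) : K)⁻¹ *
          ∑ i ∈ range (Fintype.card F - 1), gaussCoeff ψ χ i * χ x ^ i
        + (1 + ((Fintype.card F - 1 : ℕ) : K)⁻¹) := by
    rw [← sub_eq_iff_eq_add', mul_sum, ← sum_sub_distrib,
      sum_eq_single_of_mem 0 (mem_range.2 (by omega))]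
    · simp [teichmullerCoeff, gaussCoeff, AddChar.sum_sdiff_zero_eq_neg_one hψ]
    · intro i hi hi0
      rw [teichmullerCoeff, if_neg hi0, if_neg (by simp at hi; omega)]
      ring
  have hrange : range (Fintype.card F) = range (Fintype.card F - 1 + 1) := by
    rw [Nat.sub_add_cancel hQ1.le]
  have hcast : (Fintype.card F : K) = ((Fintype.card F - 1 : ℕ) : K) + 1 := by
    rw [Nat.cast_sub hQ1.le]
    ring
  rw [hrange, sum_range_succ, hlow, sum_gaussCoeff_mul_pow ψ hχ hx, teichmullerCoeff,
    if_neg (by omega), if_pos rfl, ← map_pow, FiniteField.pow_card_sub_one_eq_one x hx, map_one,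
    hcast]
  field_simp
  ring

end Expansion

theorem AddChar.map_mul_sum_eq_sum_piFinset {ι A K : Type*} [Fintype ι] [DecidableEq ι]
    [CommSemiring A] [CommSemiring K] (ψ : AddChar A K) (χ : A →*₀ K) {c : ℕ → K} {N : ℕ}
    (hexp : ∀ x, ψ x = ∑ i ∈ range N, c i * χ x ^ i) (y : A) (a : ι → A) :
    ψ (y * ∑ i, a i) = ∑ r ∈ Fintype.piFinset fun _ => range N,
      (∏ i, c (r i) * χ (a i) ^ r i) * χ y ^ ∑ i, r i := by
  rw [mul_sum, AddChar.map_sum_eq_prod]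
  simp_rw [hexp, map_mul, mul_pow]
  rw [prod_univ_sum]
  refine sum_congr rfl fun r _ => ?_
  rw [← prod_pow_eq_pow_sum, ← prod_mul_distrib]
  exact prod_congr rfl fun i _ => by ring

theorem sum_piFinset_range_mul_ite {ι K : Type*} [Fintype ι] [DecidableEq ι] [CommSemiring K]
    {N : ℕ} (hN : 0 < N) (d : ℕ) (f : (ι → ℕ) → K) (u v : K) :
    ∑ r ∈ Fintype.piFinset (fun _ : ι => range N),
        f r * (if ∑ i, r i = 0 then u else if d ∣ ∑ i, r i then v else 0)
      = f 0 * u + v * ∑ r ∈ (Fintype.piFinset fun _ : ι => range N).filter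
          (fun r => d ∣ ∑ i, r i ∧ 0 < ∑ i, r i), f r := by
  simp only [mul_ite, mul_zero]
  rw [sum_ite, sum_ite, sum_const_zero, add_zero, filter_filter, mul_sum]
  congr 1
  · have hzero : (Fintype.piFinset fun _ : ι => range N).filter (fun r => ∑ i, r i = 0) = {0} := by
      ext r
      simp only [mem_filter, Fintype.mem_piFinset, mem_range, sum_eq_zero_iff, mem_univ,
        true_implies, mem_singleton, funext_iff, Pi.zero_apply]
      exact ⟨fun h => h.2, fun h => ⟨fun i => h i ▸ hN, h⟩⟩
    rw [hzero, sum_singleton]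
  · refine sum_congr (filter_congr fun r _ => ?_) fun r _ => mul_comm _ _
    omega

theorem ite_trace_eq_zero_eq_card_add_sum {K : Type*} [Field K] {p : ℕ} [Fact p.Prime] {ξ : K}
    (hξ : IsPrimitiveRoot ξ p) {Fq Fqm ι : Type*} [Field Fq] [Field Fqm] [Fintype Fq]
    [DecidableEq Fq] [Finite Fqm] [Algebra (ZMod p) Fq] [Algebra (ZMod p) Fqm] [Algebra Fq Fqm]
    [IsScalarTower (ZMod p) Fq Fqm] [Fintype ι] [DecidableEq ι]
    {χ : Fqm →*₀ K} (hχ : Function.Injective χ) {c : ℕ → K} {N : ℕ} (hN : 0 < N) (hc : c 0 = 1)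
    (hexp : ∀ x, traceChar hξ Fqm x = ∑ i ∈ range N, c i * χ x ^ i) (a : ι → Fqm) :
    (if Algebra.trace Fq Fqm (∑ i, a i) = 0 then (Fintype.card Fq : K) else 0)
      = Fintype.card Fq + ((Fintype.card Fq - 1 : ℕ) : K) *
        ∑ r ∈ (Fintype.piFinset fun _ : ι => range N).filter
          (fun r => Fintype.card Fq - 1 ∣ ∑ i, r i ∧ 0 < ∑ i, r i),
          ∏ i, c (r i) * χ (a i) ^ r i := by
  have hpow (S : ℕ) : ∑ y : Fq, χ (algebraMap Fq Fqm y) ^ S = if S = 0 then (Fintype.card Fq : K)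
      else if Fintype.card Fq - 1 ∣ S then ((Fintype.card Fq - 1 : ℕ) : K) else 0 :=
    (χ.comp (algebraMap Fq Fqm).toMonoidWithZeroHom).sum_pow_eq_ite
      (hχ.comp (algebraMap Fq Fqm).injective) S
  rw [← sum_traceChar_algebraMap_mul hξ Fq Fqm]
  simp_rw [AddChar.map_mul_sum_eq_sum_piFinset _ χ hexp]
  rw [sum_comm]
  simp_rw [← mul_sum, hpow]
  rw [sum_piFinset_range_mul_ite hN]
  simp [hc]

theorem natCast_card_trace_ne_zero_eq {K : Type*} [Field K] [CharZero K] {p : ℕ} [Fact p.Prime]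
    {ξ : K} (hξ : IsPrimitiveRoot ξ p) {Fq Fqm : Type*} [Field Fq] [Field Fqm] [Fintype Fq]
    [Fintype Fqm] [DecidableEq Fq] [DecidableEq Fqm] [Algebra (ZMod p) Fq] [Algebra (ZMod p) Fqm]
    [Algebra Fq Fqm] [IsScalarTower (ZMod p) Fq Fqm] {q Q : ℕ} (hq : Fintype.card Fq = q)
    (hQ : Fintype.card Fqm = Q) {T : Fqm →*₀ K} (hT : Function.Injective T) {lam : ℕ → K}
    (hlam : lam = teichmullerCoeff (traceChar hξ Fqm) T) {k n : ℕ}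
    (G : Matrix (Fin k) (Fin n) Fqm) (α : Fin k → Fqm) :
    ((univ.filter fun j : Fin n => Algebra.trace Fq Fqm (∑ i, α i * G i j) ≠ 0).card : K)
      = -(((q - 1 : ℕ) : K) * (q : K)⁻¹) *
        ∑ r ∈ (Fintype.piFinset fun _ : Fin k => range Q).filter
          (fun r => q - 1 ∣ ∑ i, r i ∧ 0 < ∑ i, r i),
          (∏ i, lam (r i)) * (∑ j, ∏ i, T (G i j) ^ r i) * ∏ i, T (α i) ^ r i := by
  subst hq hQ
  have hexp (x : Fqm) : traceChar hξ Fqm x = ∑ i ∈ range (Fintype.card Fqm), lam i * T x ^ i :=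
    hlam ▸ AddChar.eq_sum_teichmullerCoeff_mul_pow (traceChar_ne_one hξ Fqm) hT
      (Nat.cast_ne_zero.2 (by have := Fintype.one_lt_card (α := Fqm); omega)) x
  have hq : (Fintype.card Fq : K) ≠ 0 := Nat.cast_ne_zero.2 Fintype.card_ne_zero
  have hweight (j : Fin n) : (if Algebra.trace Fq Fqm (∑ i, α i * G i j) ≠ 0 then 1 else 0 : K)
      = -(((Fintype.card Fq - 1 : ℕ) : K) * (Fintype.card Fq : K)⁻¹) *
        ∑ r ∈ (Fintype.piFinset fun _ : Fin k => range (Fintype.card Fqm)).filter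
          (fun r => Fintype.card Fq - 1 ∣ ∑ i, r i ∧ 0 < ∑ i, r i),
          ∏ i, lam (r i) * T (α i * G i j) ^ r i := by
    have h := ite_trace_eq_zero_eq_card_add_sum hξ (Fq := Fq) hT Fintype.card_pos
      (by simp [hlam, teichmullerCoeff]) hexp (fun i => α i * G i j)
    rw [ite_not]
    split_ifs at h ⊢ <;> field_simp <;> linear_combination -h
  rw [natCast_card_filter]
  simp_rw [hweight]
  rw [← mul_sum, sum_comm]
  congr 1
  refine sum_congr rfl fun r _ => ?_
  simp only [map_mul, mul_pow, prod_mul_distrib, mul_sum, sum_mul]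
  exact sum_congr rfl fun j _ => by ring

theorem stmt_12_general (p e m k n : ℕ) [Fact p.Prime]
    (Fq Fqm : Type) [Field Fq] [Field Fqm] [Fintype Fq] [Fintype Fqm]
    [DecidableEq Fq] [DecidableEq Fqm]
    [Algebra (ZMod p) Fq] [Algebra (ZMod p) Fqm] [Algebra Fq Fqm]
    [IsScalarTower (ZMod p) Fq Fqm]
    (hq : Fintype.card Fq = p ^ e) (hqm : Fintype.card Fqm = (p ^ e) ^ m)
    (ξp : CyclotomicField (p * ((p ^ e) ^ m - 1)) ℚ_[p])
    (hξp : IsPrimitiveRoot ξp p)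
    (T : Fqm → CyclotomicField (p * ((p ^ e) ^ m - 1)) ℚ_[p])
    (hT0 : T 0 = 0)
    (hTmul : ∀ x y, T (x * y) = T x * T y)
    (hTinj : Function.Injective T)
    (g : ℕ → CyclotomicField (p * ((p ^ e) ^ m - 1)) ℚ_[p])
    (hg : ∀ i, g i = ∑ x ∈ (Finset.univ \ {0} : Finset Fqm),
        ξp ^ (Algebra.trace (ZMod p) Fqm x).val * (T x)⁻¹ ^ i)
    (lam : ℕ → CyclotomicField (p * ((p ^ e) ^ m - 1)) ℚ_[p])
    (hlam : ∀ i, lam i = if i = 0 then 1 else if i = (p ^ e) ^ m - 1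
        then -(((p ^ e) ^ m : ℕ) : CyclotomicField (p * ((p ^ e) ^ m - 1)) ℚ_[p])
          * ((((p ^ e) ^ m - 1 : ℕ) : CyclotomicField (p * ((p ^ e) ^ m - 1)) ℚ_[p]))⁻¹
        else g i * ((((p ^ e) ^ m - 1 : ℕ) : CyclotomicField (p * ((p ^ e) ^ m - 1)) ℚ_[p]))⁻¹)
    (G : Matrix (Fin k) (Fin n) Fqm) :
    ∀ α : Fin k → Fqm,
      (((Finset.univ.filter fun j : Fin n =>
            Algebra.trace Fq Fqm (∑ i, α i * G i j) ≠ 0).card : ℕ)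
          : CyclotomicField (p * ((p ^ e) ^ m - 1)) ℚ_[p])
        = -((((p ^ e - 1 : ℕ) : CyclotomicField (p * ((p ^ e) ^ m - 1)) ℚ_[p]))
              * (((p ^ e : ℕ) : CyclotomicField (p * ((p ^ e) ^ m - 1)) ℚ_[p]))⁻¹)
          * ∑ r ∈ (Fintype.piFinset fun _ : Fin k => Finset.range ((p ^ e) ^ m)).filter
              (fun r => (p ^ e - 1) ∣ (∑ i, r i) ∧ 0 < ∑ i, r i),
              (∏ i, lam (r i)) * (∑ j, ∏ i, T (G i j) ^ (r i)) * (∏ i, T (α i) ^ (r i)) := by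
  intro α
  have hlam' : lam = teichmullerCoeff (traceChar hξp Fqm) (.ofInjective T hT0 hTmul hTinj) := by
    funext i
    rw [hlam, hg, teichmullerCoeff, gaussCoeff, hqm]
    rfl
  exact natCast_card_trace_ne_zero_eq hξp hq hqm hTinj hlam' G α

/-- **weight polarization formula.**  Let `p` be a prime, `q = p^e`,
`m ≥ 1`, and let `G = (g_{ij})` be a `k × n` matrix over `𝔽_{q^m}`.  For
`α ∈ 𝔽_{q^m}^k` let `c(α)_j = Tr_{q^m/q}(∑_i α_i g_{ij})`.  Then, inside
`ℚ_p(ξ_{p(q^m−1)})`,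
`wt(c(α)) = −((q−1)/q) ∑_{r ∈ R} (∏_i λ_{r_i}) (∑_j ∏_i T(g_{ij})^{r_i}) (∏_i T(α_i)^{r_i})`,
where `R = {r ∈ [0,q^m−1]^k : ∑ r_i ≡ 0 (mod q−1), ∑ r_i > 0}` and the `λ_i` are
the Gauss-sum coefficients `λ_0 = 1`, `λ_i = g(T^{−i})/(q^m−1)` for
`1 ≤ i ≤ q^m−2`, `λ_{q^m−1} = −q^m/(q^m−1)`.

Here `ℚ_p(ξ_{p(q^m−1)})` is realized as `CyclotomicField (p(q^m−1)) ℚ_[p]`, `ξ_p`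
is a primitive `p`-th root of unity therein, and the Teichmüller lift `T` is
axiomatized by the hypotheses `hT*`. -/
theorem stmt_12 (p e m k n : ℕ) [Fact p.Prime] (he : 1 ≤ e) (hm : 1 ≤ m)
    (hpos : 0 < p * ((p ^ e) ^ m - 1))
    (Fq Fqm : Type) [Field Fq] [Field Fqm] [Fintype Fq] [Fintype Fqm]
    [DecidableEq Fq] [DecidableEq Fqm]
    [Algebra (ZMod p) Fq] [Algebra (ZMod p) Fqm] [Algebra Fq Fqm]
    [IsScalarTower (ZMod p) Fq Fqm]
    (hq : Fintype.card Fq = p ^ e) (hqm : Fintype.card Fqm = (p ^ e) ^ m)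
    (ξp : CyclotomicField (p * ((p ^ e) ^ m - 1)) ℚ_[p])
    (hξp : IsPrimitiveRoot ξp p)
    (T : Fqm → CyclotomicField (p * ((p ^ e) ^ m - 1)) ℚ_[p])
    (hT0 : T 0 = 0)
    (hTmul : ∀ x y, T (x * y) = T x * T y)
    (hTq : ∀ x, T x ^ ((p ^ e) ^ m) = T x)
    (hTinj : Function.Injective T)
    (g : ℕ → CyclotomicField (p * ((p ^ e) ^ m - 1)) ℚ_[p])
    (hg : ∀ i, g i = ∑ x ∈ (Finset.univ \ {0} : Finset Fqm),
        ξp ^ (Algebra.trace (ZMod p) Fqm x).val * (T x)⁻¹ ^ i)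
    (lam : ℕ → CyclotomicField (p * ((p ^ e) ^ m - 1)) ℚ_[p])
    (hlam : ∀ i, lam i = if i = 0 then 1 else if i = (p ^ e) ^ m - 1
        then -(((p ^ e) ^ m : ℕ) : CyclotomicField (p * ((p ^ e) ^ m - 1)) ℚ_[p])
          * ((((p ^ e) ^ m - 1 : ℕ) : CyclotomicField (p * ((p ^ e) ^ m - 1)) ℚ_[p]))⁻¹
        else g i * ((((p ^ e) ^ m - 1 : ℕ) : CyclotomicField (p * ((p ^ e) ^ m - 1)) ℚ_[p]))⁻¹)
    (G : Matrix (Fin k) (Fin n) Fqm) :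
    ∀ α : Fin k → Fqm,
      (((Finset.univ.filter fun j : Fin n =>
            Algebra.trace Fq Fqm (∑ i, α i * G i j) ≠ 0).card : ℕ)
          : CyclotomicField (p * ((p ^ e) ^ m - 1)) ℚ_[p])
        = -((((p ^ e - 1 : ℕ) : CyclotomicField (p * ((p ^ e) ^ m - 1)) ℚ_[p]))
              * (((p ^ e : ℕ) : CyclotomicField (p * ((p ^ e) ^ m - 1)) ℚ_[p]))⁻¹)
          * ∑ r ∈ (Fintype.piFinset fun _ : Fin k => Finset.range ((p ^ e) ^ m)).filter
              (fun r => (p ^ e - 1) ∣ (∑ i, r i) ∧ 0 < ∑ i, r i),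
              (∏ i, lam (r i)) * (∑ j, ∏ i, T (G i j) ^ (r i)) * (∏ i, T (α i) ^ (r i)) :=
  stmt_12_general p e m k n Fq Fqm hq hqm ξp hξp T hT0 hTmul hTinj g hg lam hlam G
end

section
/- Let p be a prime, q = p^e, m, k ≥ 1, let {γ_1,…,γ_m} be a basis of 𝔽_{q^m} over 𝔽_q, and let f ∈ 𝔽_{q^m}[x_1,…,x_k] be a polynomial of degree at most d. Then there exists a polynomial F ∈ 𝔽_q[y_{1,1},…,y_{k,m}] in mk variables of total degree at most W_q(d, 𝔽_{q^m}^k) such that for all y_{i,j} ∈ 𝔽_q, Tr_{q^m/q}( f( ∑_{j=1}^m y_{1,j} γ_j, …, ∑_{j=1}^m y_{k,j} γ_j ) ) = F(y_{1,1},…,y_{k,m}), where W_q(d, 𝔽_{q^m}^k) = max{ S_q(t_1)+⋯+S_q(t_k) : (t_1,…,t_k) ∈ [0, q^m−1]^k, t_1+⋯+t_k ≤ d }. -/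
/-!
Since `x ↦ x ^ q` is `𝔽_q`-linear, a power `(∑ⱼ yⱼ γⱼ) ^ t` whose base-`q` digits are `aᵢ` equals
`∏ᵢ (∑ⱼ yⱼ γⱼ ^ qⁱ) ^ aᵢ`, a polynomial in `y` of degree `S_q(t)`. As `x ^ (q ^ m) = x` on
`𝔽_{q^m}`, the exponents of `f` may first be lowered below `q ^ m` without changing the values,
so substituting into `f` gives a polynomial `G` over `𝔽_{q^m}` of degree at most `W`. Taking the
trace coefficientwise produces `F`: the trace is `𝔽_q`-linear and the monomials in `y` lie in `𝔽_q`.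
-/

open MvPolynomial

section TraceDescent

variable {K L σ : Type*} [CommRing K] [CommRing L] [Algebra K L]

theorem MvPolynomial.exists_totalDegree_le_trace_eval (G : MvPolynomial σ L) :
    ∃ F : MvPolynomial σ K, F.totalDegree ≤ G.totalDegree ∧
      ∀ y : σ → K, Algebra.trace K L (eval (algebraMap K L ∘ y) G) = eval y F := by
  refine ⟨∑ u ∈ G.support, monomial u (Algebra.trace K L (G.coeff u)), ?_, fun y => ?_⟩
  · refine (totalDegree_finsetSum _ _).trans (Finset.sup_le fun u hu => ?_)
    exact (totalDegree_monomial_le _ _).trans (le_totalDegree hu)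
  · conv_lhs => rw [G.as_sum]
    simp only [map_sum, eval_monomial]
    refine Finset.sum_congr rfl fun u _ => ?_
    have hmon : (u.prod fun s n => (algebraMap K L ∘ y) s ^ n)
        = algebraMap K L (u.prod fun s n => y s ^ n) := by
      simp [Finsupp.prod, map_prod]
    rw [hmon, mul_comm, ← Algebra.smul_def, map_smul, smul_eq_mul, mul_comm]

end TraceDescent

section FrobeniusPowers

variable {K R ι : Type*} [Field K] [CommRing R] [Algebra K R] [Fintype ι]

theorem FiniteField.sum_smul_pow_card [Fintype K] (y : ι → K) (δ : ι → R) :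
    (∑ j, y j • δ j) ^ Fintype.card K = ∑ j, y j • δ j ^ Fintype.card K := by
  change frobeniusAlgHom K R _ = ∑ j, y j • frobeniusAlgHom K R (δ j)
  simp only [map_sum, map_smul]

theorem MvPolynomial.totalDegree_sum_C_mul_X_le_one (δ : ι → R) :
    (∑ j, C (δ j) * X j : MvPolynomial ι R).totalDegree ≤ 1 := by
  refine (totalDegree_finsetSum _ _).trans (Finset.sup_le fun j _ => ?_)
  rw [C_mul_X_eq_monomial]
  exact (totalDegree_monomial_le _ _).trans (by simp)

theorem MvPolynomial.eval_algebraMap_sum_C_mul_X (δ : ι → R) (y : ι → K) :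
    eval (algebraMap K R ∘ y) (∑ j, C (δ j) * X j) = ∑ j, y j • δ j := by
  simp [map_sum, Algebra.smul_def, mul_comm]

theorem FiniteField.exists_totalDegree_le_eval_eq_pow_ofDigits [Fintype K] (l : List ℕ)
    (δ : ι → R) :
    ∃ P : MvPolynomial ι R, P.totalDegree ≤ l.sum ∧ ∀ y : ι → K,
      eval (algebraMap K R ∘ y) P = (∑ j, y j • δ j) ^ Nat.ofDigits (Fintype.card K) l := by
  induction l generalizing δ with
  | nil => exact ⟨1, by simp, fun y => by simp [Nat.ofDigits]⟩
  | cons a l ih =>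
    obtain ⟨P, hPdeg, hPeval⟩ := ih fun j => δ j ^ Fintype.card K
    refine ⟨(∑ j, C (δ j) * X j) ^ a * P, ?_, fun y => ?_⟩
    · have hlin := totalDegree_sum_C_mul_X_le_one δ
      have hpow := totalDegree_pow (∑ j, C (δ j) * X j) a
      have hmul := totalDegree_mul ((∑ j, C (δ j) * X j) ^ a) P
      rw [List.sum_cons]
      nlinarith
    · rw [Nat.ofDigits_cons, pow_add, pow_mul, sum_smul_pow_card, map_mul, map_pow,
        eval_algebraMap_sum_C_mul_X, hPeval]

theorem FiniteField.exists_totalDegree_le_eval_eq_pow [Fintype K] (t : ℕ) (δ : ι → R) :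
    ∃ P : MvPolynomial ι R, P.totalDegree ≤ (Nat.digits (Fintype.card K) t).sum ∧
      ∀ y : ι → K, eval (algebraMap K R ∘ y) P = (∑ j, y j • δ j) ^ t := by
  simpa only [Nat.ofDigits_digits] using
    exists_totalDegree_le_eval_eq_pow_ofDigits (K := K) (Nat.digits (Fintype.card K) t) δ

end FrobeniusPowers

theorem FiniteField.exists_le_lt_card_forall_pow_eq {L : Type*} [Field L] [Fintype L] (t : ℕ) :
    ∃ s ≤ t, s < Fintype.card L ∧ ∀ x : L, x ^ t = x ^ s := by
  induction t using Nat.strong_induction_on with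
  | _ t ih =>
    by_cases ht : t < Fintype.card L
    · exact ⟨t, le_rfl, ht, fun _ => rfl⟩
    have hL : 1 < Fintype.card L := Fintype.one_lt_card
    obtain ⟨s, hs, hsL, hpow⟩ := ih (t - Fintype.card L + 1) (by omega)
    refine ⟨s, by omega, hsL, fun x => ?_⟩
    calc x ^ t = x ^ (t - Fintype.card L) * x ^ Fintype.card L := by
          rw [← pow_add, Nat.sub_add_cancel (not_lt.mp ht)]
      _ = x ^ s := by rw [pow_card, ← pow_succ, hpow]

section Substitution

variable {K L κ ι : Type*} [Field K] [Fintype K] [Field L] [Fintype L] [Algebra K L]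
  [Fintype κ] [Fintype ι]

theorem FiniteField.exists_totalDegree_le_eval_eq_eval_sum_smul (γ : ι → L)
    (f : MvPolynomial κ L) (W : ℕ)
    (hW : ∀ t : κ → ℕ, (∀ i, t i < Fintype.card L) → ∑ i, t i ≤ f.totalDegree →
      ∑ i, (Nat.digits (Fintype.card K) (t i)).sum ≤ W) :
    ∃ G : MvPolynomial (κ × ι) L, G.totalDegree ≤ W ∧
      ∀ y : κ × ι → K, eval (algebraMap K L ∘ y) G = eval (fun i => ∑ j, y (i, j) • γ j) f := by
  choose s hst hsL hspow using exists_le_lt_card_forall_pow_eq (L := L)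
  choose P hPdeg hPeval using fun t => exists_totalDegree_le_eval_eq_pow (K := K) t γ
  refine ⟨∑ u ∈ f.support, C (coeff u f) * ∏ i, rename (Prod.mk i) (P (s (u i))), ?_,
    fun y => ?_⟩
  · refine (totalDegree_finsetSum _ _).trans (Finset.sup_le fun u hu => ?_)
    have hu_sum : ∑ i, u i ≤ f.totalDegree := by
      simpa [Finsupp.sum_fintype] using le_totalDegree hu
    calc (C (coeff u f) * ∏ i, rename (Prod.mk i) (P (s (u i)))).totalDegree
        ≤ ∑ i, (P (s (u i))).totalDegree := by
          refine (totalDegree_mul _ _).trans ?_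
          rw [totalDegree_C, zero_add]
          exact (totalDegree_finsetProd _ _).trans
            (Finset.sum_le_sum fun i _ => totalDegree_rename_le _ _)
      _ ≤ ∑ i, (Nat.digits (Fintype.card K) (s (u i))).sum :=
          Finset.sum_le_sum fun i _ => hPdeg _
      _ ≤ W := hW _ (fun i => hsL _) ((Finset.sum_le_sum fun i _ => hst _).trans hu_sum)
  · rw [eval_eq' _ f, map_sum]
    refine Finset.sum_congr rfl fun u _ => ?_
    rw [map_mul, eval_C, map_prod]
    refine congrArg _ (Finset.prod_congr rfl fun i _ => ?_)
    rw [eval_rename, hspow]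
    exact hPeval _ fun j => y (i, j)

end Substitution

theorem stmt_13_general (p e m k d : ℕ)
    (Fq Fqm : Type) [Field Fq] [Field Fqm] [Fintype Fq] [Fintype Fqm] [Algebra Fq Fqm]
    (hq : Fintype.card Fq = p ^ e)
    (γ : Module.Basis (Fin m) Fq Fqm)
    (W : ℕ)
    (hW : W = ((Fintype.piFinset fun _ : Fin k => Finset.range ((p ^ e) ^ m)).filter
        (fun t => ∑ i, t i ≤ d)).sup (fun t => ∑ i, (Nat.digits (p ^ e) (t i)).sum))
    (f : MvPolynomial (Fin k) Fqm) (hf : f.totalDegree ≤ d) :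
    ∃ F : MvPolynomial (Fin k × Fin m) Fq,
      F.totalDegree ≤ W ∧
      ∀ y : Fin k × Fin m → Fq,
        Algebra.trace Fq Fqm (MvPolynomial.eval (fun i => ∑ j, y (i, j) • γ j) f)
          = MvPolynomial.eval y F := by
  have hcard : Fintype.card Fqm = (p ^ e) ^ m := by
    rw [Module.card_fintype γ, hq, Fintype.card_fin]
  obtain ⟨G, hGdeg, hGeval⟩ :=
    FiniteField.exists_totalDegree_le_eval_eq_eval_sum_smul (K := Fq) γ f W fun t ht htd => by
      rw [hq, hW]
      refine Finset.le_sup (f := fun t : Fin k → ℕ => ∑ i, (Nat.digits (p ^ e) (t i)).sum) ?_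
      simp only [Finset.mem_filter, Fintype.mem_piFinset, Finset.mem_range, ← hcard]
      exact ⟨ht, htd.trans hf⟩
  obtain ⟨F, hFdeg, hFeval⟩ := G.exists_totalDegree_le_trace_eval (K := Fq)
  exact ⟨F, hFdeg.trans hGdeg, fun y => by rw [← hGeval, hFeval]⟩

/-- Let `p` be a prime, `q = p^e`, `m, k ≥ 1`, let `γ_1,…,γ_m`
be a basis of `𝔽_{q^m}` over `𝔽_q`, and let `f ∈ 𝔽_{q^m}[x_1,…,x_k]` have degree
at most `d`.  Then there is a polynomial `F ∈ 𝔽_q[y_{1,1},…,y_{k,m}]` of total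
degree at most `W_q(d, 𝔽_{q^m}^k)` with
`Tr_{q^m/q}( f(∑_j y_{1,j}γ_j, …, ∑_j y_{k,j}γ_j) ) = F(y)` for all `y` over `𝔽_q`,
where `W_q(d, 𝔽_{q^m}^k) = max{ ∑_i S_q(t_i) : t ∈ [0,q^m−1]^k, ∑_i t_i ≤ d }`. -/
theorem stmt_13 (p e m k d : ℕ) [Fact p.Prime] (he : 1 ≤ e) (hm : 1 ≤ m) (hk : 1 ≤ k)
    (Fq Fqm : Type) [Field Fq] [Field Fqm] [Fintype Fq] [Fintype Fqm] [Algebra Fq Fqm]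
    (hq : Fintype.card Fq = p ^ e) (hqm : Fintype.card Fqm = (p ^ e) ^ m)
    (γ : Module.Basis (Fin m) Fq Fqm)
    (W : ℕ)
    (hW : W = ((Fintype.piFinset fun _ : Fin k => Finset.range ((p ^ e) ^ m)).filter
        (fun t => ∑ i, t i ≤ d)).sup (fun t => ∑ i, (Nat.digits (p ^ e) (t i)).sum))
    (f : MvPolynomial (Fin k) Fqm) (hf : f.totalDegree ≤ d) :
    ∃ F : MvPolynomial (Fin k × Fin m) Fq,
      F.totalDegree ≤ W ∧
      ∀ y : Fin k × Fin m → Fq,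
        Algebra.trace Fq Fqm (MvPolynomial.eval (fun i => ∑ j, y (i, j) • γ j) f)
          = MvPolynomial.eval y F :=
  stmt_13_general p e m k d Fq Fqm hq γ W hW f hf
end

section
/- Let p be a prime, q = p^e, m, k ≥ 1, let {γ_1,…,γ_{em}} be a basis of 𝔽_{q^m} over 𝔽_p, let {β_1,…,β_e} be a basis of 𝔽_q over 𝔽_p, and let f ∈ 𝔽_{q^m}[x_1,…,x_k] be a polynomial of degree at most d. Then there exist polynomials G_1,…,G_e ∈ 𝔽_p[y_{1,1},…,y_{k,em}] in emk variables, each of total degree at most W_p(d, 𝔽_{q^m}^k), such that for all y_{i,j} ∈ 𝔽_p and each 1 ≤ rr ≤ e, G_rr(y) = Tr_{q/p}( β_rr · Tr_{q^m/q}( f( ∑_{j=1}^{em} y_{1,j} γ_j, …, ∑_{j=1}^{em} y_{k,j} γ_j ) ) ); consequently Tr_{q^m/q}(f(x(y))) = 0 if and only if G_1(y) = ⋯ = G_e(y) = 0. Here W_p(d, 𝔽_{q^m}^k) = max{ S_p(t_1)+⋯+S_p(t_k) : (t_1,…,t_k) ∈ [0, q^m−1]^k, t_1+⋯+t_k ≤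 d }. -/
/-!
Since the Frobenius fixes `𝔽_p`, `(∑ j, y_j γ_j) ^ p ^ a = ∑ j, y_j γ_j ^ p ^ a` is a linear form in
`y`; writing `u` in base `p` therefore expresses `x ^ u` as a product of `S_p(u)` linear forms.
On `𝔽_{q^m}` the power `x ^ t` only depends on `t` through a representative in `[0, q^m - 1]`
that is at most `t`, so substituting these products into `f` gives a polynomial `P` over
`𝔽_{q^m}` of degree at most `W` which agrees with `f(x(y))` at every `y` over `𝔽_p`.
Applying the `𝔽_p`-linear functional `c ↦ Tr_{q/p}(β_r Tr_{q^m/q}(c))` to the coefficients of `P`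
gives `G_r`, and the nondegeneracy of the trace form of `𝔽_q / 𝔽_p` gives the equivalence.
-/

open MvPolynomial Finset

theorem pow_ofDigits {M : Type*} [CommMonoid M] (p : ℕ) (x : M) (L : List ℕ) :
    x ^ Nat.ofDigits p L = ∏ a : Fin L.length, (x ^ p ^ (a : ℕ)) ^ L[a] := by
  induction L generalizing x with
  | nil => simp [Nat.ofDigits]
  | cons c L ih =>
    simp only [Nat.ofDigits_cons, pow_add, pow_mul, ih, List.length_cons, Fin.prod_univ_succ,
      Fin.val_zero, pow_zero, pow_one, Fin.val_succ, pow_succ']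
    rfl

theorem sum_smul_pow_char_pow {ι A : Type*} [Fintype ι] [CommRing A] {p : ℕ} [Fact p.Prime]
    [Algebra (ZMod p) A] [ExpChar A p] (y : ι → ZMod p) (γ : ι → A) (a : ℕ) :
    (∑ j, y j • γ j) ^ p ^ a = ∑ j, y j • γ j ^ p ^ a := by
  rw [sum_pow_char_pow]
  simp only [smul_pow, ZMod.pow_card_pow]

section DigitPow

variable {ι A : Type*} [Fintype ι] [CommRing A] (p : ℕ)

noncomputable def digitPowPoly (γ : ι → A) (u : ℕ) : MvPolynomial ι A :=
  ∏ a : Fin (Nat.digits p u).length,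
    (∑ j, C (γ j ^ p ^ (a : ℕ)) * X j) ^ (Nat.digits p u)[a]

theorem isHomogeneous_digitPowPoly (γ : ι → A) (u : ℕ) :
    (digitPowPoly p γ u).IsHomogeneous (Nat.digits p u).sum := by
  rw [← Fin.sum_univ_getElem]
  refine IsHomogeneous.prod _ _ (fun a => (Nat.digits p u)[a]) fun a _ => ?_
  simpa only [one_mul] using
    (IsHomogeneous.sum _ _ 1 fun j _ => isHomogeneous_C_mul_X _ j).pow (Nat.digits p u)[a]

theorem eval_digitPowPoly [Fact p.Prime] [Algebra (ZMod p) A] [ExpChar A p]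
    (γ : ι → A) (y : ι → ZMod p) (u : ℕ) :
    eval (fun j => algebraMap (ZMod p) A (y j)) (digitPowPoly p γ u) = (∑ j, y j • γ j) ^ u := by
  conv_rhs => rw [← Nat.ofDigits_digits p u, pow_ofDigits]
  simp_rw [sum_smul_pow_char_pow y γ]
  simp only [digitPowPoly, map_prod, map_pow, map_sum, map_mul, eval_C,
    eval_X, Algebra.smul_def, mul_comm]

end DigitPow

-- Positive exponents are reduced into `[1, Q - 1]`, not `[0, Q - 2]`, because `0 ^ 0 = 1`.
def reduceExp (Q t : ℕ) : ℕ := if t = 0 then 0 else (t - 1) % (Q - 1) + 1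

theorem reduceExp_le (Q t : ℕ) : reduceExp Q t ≤ t := by
  unfold reduceExp
  split
  · omega
  · have := Nat.mod_le (t - 1) (Q - 1)
    omega

theorem reduceExp_lt {Q : ℕ} (hQ : 2 ≤ Q) (t : ℕ) : reduceExp Q t < Q := by
  unfold reduceExp
  split
  · omega
  · have := Nat.mod_lt (t - 1) (y := Q - 1) (by omega)
    omega

theorem FiniteField.pow_reduceExp {F : Type*} [Field F] [Fintype F] (x : F) (t : ℕ) :
    x ^ reduceExp (Fintype.card F) t = x ^ t := by
  unfold reduceExp
  split
  · simp [*]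
  · rename_i ht
    rcases eq_or_ne x 0 with rfl | hx
    · rw [zero_pow ht, zero_pow (by omega)]
    · have ht' : t = (t - 1) % (Fintype.card F - 1) + 1
          + (Fintype.card F - 1) * ((t - 1) / (Fintype.card F - 1)) := by
        have := Nat.mod_add_div (t - 1) (Fintype.card F - 1)
        omega
      conv_rhs => rw [ht', pow_add, pow_mul, pow_card_sub_one_eq_one x hx, one_pow, mul_one]

section ReducedSubst

variable {σ τ F : Type*} [Fintype σ] [Field F] [Fintype F]

noncomputable def reducedSubst (f : MvPolynomial σ F) (R : σ → ℕ → MvPolynomial τ F) :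
    MvPolynomial τ F :=
  ∑ s ∈ f.support, C (coeff s f) * ∏ i, R i (reduceExp (Fintype.card F) (s i))

theorem eval_reducedSubst (f : MvPolynomial σ F) (R : σ → ℕ → MvPolynomial τ F) (z : τ → F)
    (x : σ → F) (hR : ∀ i u, eval z (R i u) = x i ^ u) :
    eval z (reducedSubst f R) = eval x f := by
  simp only [reducedSubst, map_sum, map_mul, eval_C, map_prod, hR, FiniteField.pow_reduceExp]
  rw [eval_eq']

theorem totalDegree_reducedSubst_le (f : MvPolynomial σ F) (R : σ → ℕ → MvPolynomial τ F)
    {D : ℕ → ℕ} {d W : ℕ} (hR : ∀ i u, (R i u).totalDegree ≤ D u) (hf : f.totalDegree ≤ d)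
    (hW : ∀ t : σ → ℕ, (∀ i, t i < Fintype.card F) → ∑ i, t i ≤ d → ∑ i, D (t i) ≤ W) :
    (reducedSubst f R).totalDegree ≤ W := by
  refine (totalDegree_finsetSum _ _).trans <| Finset.sup_le fun s hs => ?_
  refine (totalDegree_mul _ _).trans ?_
  rw [totalDegree_C, zero_add]
  refine (totalDegree_finsetProd _ _).trans <| (sum_le_sum fun i _ => hR i _).trans ?_
  refine hW _ (fun i => reduceExp_lt Fintype.one_lt_card _) ?_
  calc ∑ i, reduceExp (Fintype.card F) (s i) ≤ ∑ i, s i := sum_le_sum fun i _ => reduceExp_le _ _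
    _ = s.sum fun _ n => n := (Finsupp.sum_fintype s (fun _ n => n) fun _ => rfl).symm
    _ ≤ d := (le_totalDegree hs).trans hf

end ReducedSubst

namespace MvPolynomial

variable {σ K A : Type*} [CommSemiring K] [CommSemiring A] [Algebra K A]

noncomputable def mapCoeffs (L : A →ₗ[K] K) (P : MvPolynomial σ A) : MvPolynomial σ K :=
  ∑ s ∈ P.support, monomial s (L (coeff s P))

theorem totalDegree_mapCoeffs_le (L : A →ₗ[K] K) (P : MvPolynomial σ A) :
    (mapCoeffs L P).totalDegree ≤ P.totalDegree :=
  (totalDegree_finsetSum _ _).trans <| Finset.sup_le fun _ hs =>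
    (totalDegree_monomial_le _ _).trans (le_totalDegree hs)

theorem eval_mapCoeffs (L : A →ₗ[K] K) (P : MvPolynomial σ A) (y : σ → K) :
    eval y (mapCoeffs L P) = L (eval (fun i => algebraMap K A (y i)) P) := by
  rw [mapCoeffs, map_sum, eval_eq, map_sum]
  refine sum_congr rfl fun s _ => ?_
  have hprod : ∏ i ∈ s.support, algebraMap K A (y i) ^ s i
      = algebraMap K A (∏ i ∈ s.support, y i ^ s i) := by
    simp only [map_prod, map_pow]
  rw [eval_monomial, Finsupp.prod, hprod, ← Algebra.commutes, ← Algebra.smul_def, map_smul,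
    smul_eq_mul, mul_comm]

end MvPolynomial

theorem Algebra.eq_zero_iff_forall_trace_basis_mul_eq_zero {ι K L : Type*} [Field K] [Field L]
    [Algebra K L] [FiniteDimensional K L] [Algebra.IsSeparable K L] (b : Module.Basis ι K L)
    (w : L) : w = 0 ↔ ∀ i, trace K L (b i * w) = 0 := by
  refine ⟨fun h i => by simp [h], fun h => (traceForm_nondegenerate K L).1 w fun z => ?_⟩
  have : traceForm K L w = 0 := b.ext fun i => by simp [traceForm_apply, mul_comm w, h]
  exact LinearMap.congr_fun this z

theorem stmt_14_general (p e m k d : ℕ) [Fact p.Prime]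
    (Fq Fqm : Type) [Field Fq] [Field Fqm] [Fintype Fqm]
    [Algebra (ZMod p) Fq] [Algebra (ZMod p) Fqm] [Algebra Fq Fqm]
    [IsScalarTower (ZMod p) Fq Fqm]
    (hqm : Fintype.card Fqm = (p ^ e) ^ m)
    (γ : Module.Basis (Fin (e * m)) (ZMod p) Fqm)
    (β : Module.Basis (Fin e) (ZMod p) Fq)
    (W : ℕ)
    (hW : W = ((Fintype.piFinset fun _ : Fin k => Finset.range ((p ^ e) ^ m)).filter
        (fun t => ∑ i, t i ≤ d)).sup (fun t => ∑ i, (Nat.digits p (t i)).sum))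
    (f : MvPolynomial (Fin k) Fqm) (hf : f.totalDegree ≤ d) :
    ∃ G : Fin e → MvPolynomial (Fin k × Fin (e * m)) (ZMod p),
      (∀ r, (G r).totalDegree ≤ W) ∧
      (∀ (y : Fin k × Fin (e * m) → ZMod p) (r : Fin e),
        MvPolynomial.eval y (G r)
          = Algebra.trace (ZMod p) Fq (β r *
              Algebra.trace Fq Fqm
                (MvPolynomial.eval (fun i => ∑ j, y (i, j) • γ j) f))) ∧
      (∀ y : Fin k × Fin (e * m) → ZMod p,
        (Algebra.trace Fq Fqm
            (MvPolynomial.eval (fun i => ∑ j, y (i, j) • γ j) f) = 0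
          ↔ ∀ r : Fin e, MvPolynomial.eval y (G r) = 0)) := by
  have : CharP Fqm p := charP_of_injective_algebraMap (algebraMap (ZMod p) Fqm).injective p
  set P := reducedSubst f fun i u => rename (Prod.mk i) (digitPowPoly p γ u)
  have hP : ∀ y : Fin k × Fin (e * m) → ZMod p, eval (fun ij => algebraMap _ _ (y ij)) P
      = eval (fun i => ∑ j, y (i, j) • γ j) f := fun y =>
    eval_reducedSubst _ _ _ _ fun i u => by rw [eval_rename_prod_mk, eval_digitPowPoly]
  have hPdeg : P.totalDegree ≤ W :=
    totalDegree_reducedSubst_le _ _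
      (fun i u => ((isHomogeneous_digitPowPoly p γ u).rename_isHomogeneous).totalDegree_le) hf
      fun t ht htd => hW ▸ le_sup (f := fun t => ∑ i, (Nat.digits p (t i)).sum) (mem_filter.2
        ⟨Fintype.mem_piFinset.2 fun i => mem_range.2 (hqm ▸ ht i), htd⟩)
  let L (r : Fin e) : Fqm →ₗ[ZMod p] ZMod p := Algebra.trace (ZMod p) Fq ∘ₗ
    LinearMap.mulLeft (ZMod p) (β r) ∘ₗ (Algebra.trace Fq Fqm).restrictScalars (ZMod p)
  have hG : ∀ y r, eval y (mapCoeffs (L r) P)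
      = Algebra.trace (ZMod p) Fq (β r * Algebra.trace Fq Fqm
          (eval (fun i => ∑ j, y (i, j) • γ j) f)) := fun y r => by
    rw [eval_mapCoeffs, hP]
    rfl
  refine ⟨fun r => mapCoeffs (L r) P, fun r => (totalDegree_mapCoeffs_le _ _).trans hPdeg, hG,
    fun y => ?_⟩
  have : FiniteDimensional (ZMod p) Fq := .of_basis β
  simp only [hG]
  exact Algebra.eq_zero_iff_forall_trace_basis_mul_eq_zero β _

/-- Let `p` be a prime, `q = p^e`, `m, k ≥ 1`, let
`γ_1,…,γ_{em}` be a basis of `𝔽_{q^m}` over `𝔽_p`, let `β_1,…,β_e` be a basis of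
`𝔽_q` over `𝔽_p`, and let `f ∈ 𝔽_{q^m}[x_1,…,x_k]` have degree at most `d`.
Then there are polynomials `G_1,…,G_e` over `𝔽_p` in the `emk` variables
`y_{i,j}`, each of total degree at most `W_p(d, 𝔽_{q^m}^k)`, with
`G_r(y) = Tr_{q/p}( β_r · Tr_{q^m/q}( f(∑_j y_{1,j}γ_j, …, ∑_j y_{k,j}γ_j) ) )`
for all `y` over `𝔽_p`; consequently `Tr_{q^m/q}(f(x(y))) = 0` iff all `G_r(y) = 0`. -/
theorem stmt_14 (p e m k d : ℕ) [Fact p.Prime] (he : 1 ≤ e) (hm : 1 ≤ m) (hk : 1 ≤ k)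
    (Fq Fqm : Type) [Field Fq] [Field Fqm] [Fintype Fq] [Fintype Fqm]
    [Algebra (ZMod p) Fq] [Algebra (ZMod p) Fqm] [Algebra Fq Fqm]
    [IsScalarTower (ZMod p) Fq Fqm]
    (hq : Fintype.card Fq = p ^ e) (hqm : Fintype.card Fqm = (p ^ e) ^ m)
    (γ : Module.Basis (Fin (e * m)) (ZMod p) Fqm)
    (β : Module.Basis (Fin e) (ZMod p) Fq)
    (W : ℕ)
    (hW : W = ((Fintype.piFinset fun _ : Fin k => Finset.range ((p ^ e) ^ m)).filter
        (fun t => ∑ i, t i ≤ d)).sup (fun t => ∑ i, (Nat.digits p (t i)).sum))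
    (f : MvPolynomial (Fin k) Fqm) (hf : f.totalDegree ≤ d) :
    ∃ G : Fin e → MvPolynomial (Fin k × Fin (e * m)) (ZMod p),
      (∀ r, (G r).totalDegree ≤ W) ∧
      (∀ (y : Fin k × Fin (e * m) → ZMod p) (r : Fin e),
        MvPolynomial.eval y (G r)
          = Algebra.trace (ZMod p) Fq (β r *
              Algebra.trace Fq Fqm
                (MvPolynomial.eval (fun i => ∑ j, y (i, j) • γ j) f))) ∧
      (∀ y : Fin k × Fin (e * m) → ZMod p,
        (Algebra.trace Fq Fqm
            (MvPolynomial.eval (fun i => ∑ j, y (i, j) • γ j) f) = 0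
          ↔ ∀ r : Fin e, MvPolynomial.eval y (G r) = 0)) :=
  stmt_14_general p e m k d Fq Fqm hqm γ β W hW f hf
end

section
/- Let p be a prime and q = p^e. For each 0 ≤ i ≤ q−2, the Gauss sum g(T^{−i}) = ∑_{x ∈ 𝔽_q^×} ξ_p^{Tr_{q/p}(x)} T(x)^{−i} ∈ ℤ_p[ξ_{p(q−1)}] has p-adic valuation ν_p(g(T^{−i})) = S_p(i)/(p−1); equivalently, (ξ_p − 1)^{S_p(i)} divides g(T^{−i}) in ℤ_p[ξ_{p(q−1)}] but (ξ_p − 1)^{S_p(i)+1} does not. Consequently, the coefficients λ_i defined by λ_0 = 1, λ_i = g(T^{−i})/(q−1) for 1 ≤ i ≤ q−2, and λ_{q−1} = −q/(q−1) satisfy ν_p(λ_i) = S_p(i)/(p−1) for all 0 ≤ i ≤ q−1. -/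
/-!
Put `π = ξ_p - 1` and `ω = T⁻¹`, and write `g(i)` for the Gauss sum of `ω^i` against the
additive character `ψ(x) = ξ_p ^ Tr(x)`. Since `p = ∏ (1 - ζ)` over the `p - 1` primitive
`p`-th roots `ζ`, all of the same valuation, `ν(π) = 1/(p-1)`. Moreover:
* `g(0) = -1`;
* `g(p i) = g(i)`, because `x ↦ x^p` permutes `𝔽_q` and preserves the trace;
* `g(1) ≡ π ∑ Tr(x) ω(x) (mod π²)`, from `(1 + π)^t ≡ 1 + t π`, and the coefficient is a unit
  because `T` is additive modulo the maximal ideal and `∑ Tr(x) x⁻¹ = -1` in `𝔽_q`;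
* `g(1) g(i-1) = J(ω, ω^(i-1)) g(i)` for `2 ≤ i ≤ q - 2`, where the Jacobi sum reduces to
  `∑ x⁻¹ (1 - x)^(-(i-1)) = -i` in `𝔽_q`, a unit when `p ∤ i`.
As `S_p(p i) = S_p(i)` and `S_p(i) = S_p(i-1) + 1` for `p ∤ i`, induction on `i` gives
`ν(g(i)) = S_p(i) ν(π)`. Finally `ν(q - 1) = 0` and `ν(q) = e = S_p(q - 1)/(p - 1)`.
-/

open Finset

namespace Nat

theorem digits_sum_add_base_mul {b x : ℕ} (hb : 1 < b) (hx : x < b) (y : ℕ) :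
    (b.digits (x + b * y)).sum = x + (b.digits y).sum := by
  rcases eq_or_ne x 0 with rfl | hx0
  · rcases eq_or_ne y 0 with rfl | hy0
    · simp
    · rw [digits_add b hb 0 y hx (Or.inr hy0), List.sum_cons]
  · rw [digits_add b hb x y hx (Or.inl hx0), List.sum_cons]

theorem digits_sum_base_mul {b : ℕ} (hb : 1 < b) (m : ℕ) :
    (b.digits (b * m)).sum = (b.digits m).sum := by
  simpa using digits_sum_add_base_mul hb (by omega : 0 < b) m

theorem digits_sum_eq_digits_sum_sub_one_add_one {b n : ℕ} (hb : 1 < b) (hn : ¬ b ∣ n) :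
    (b.digits n).sum = (b.digits (n - 1)).sum + 1 := by
  have hmod : n % b ≠ 0 := fun h => hn (dvd_of_mod_eq_zero h)
  have hlt := mod_lt n (by omega : 0 < b)
  have hn' : n - 1 = (n % b - 1) + b * (n / b) := by
    have := mod_add_div n b
    omega
  conv_lhs => rw [← mod_add_div n b]
  rw [hn', digits_sum_add_base_mul hb hlt, digits_sum_add_base_mul hb (by omega)]
  omega

theorem digits_sum_pow_sub_one {b : ℕ} (hb : 1 < b) (k : ℕ) :
    (b.digits (b ^ k - 1)).sum = k * (b - 1) := by
  induction k with
  | zero => simp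
  | succ k ih =>
    have hle : b ≤ b * b ^ k := Nat.le_mul_of_pos_right b (Nat.pow_pos (by omega))
    have hk : b ^ (k + 1) - 1 = (b - 1) + b * (b ^ k - 1) := by
      rw [pow_succ, Nat.mul_sub, mul_one, mul_comm]
      omega
    rw [hk, digits_sum_add_base_mul hb (by omega), ih]
    ring

end Nat

namespace FiniteField

variable {F : Type*} [Field F] [Fintype F]

theorem inv_pow_eq_pow_card_sub_one_sub (y : F) {n : ℕ} (hn0 : n ≠ 0)
    (hn : n < Fintype.card F - 1) : y⁻¹ ^ n = y ^ (Fintype.card F - 1 - n) := by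
  rcases eq_or_ne y 0 with rfl | hy
  · rw [inv_zero, zero_pow hn0, zero_pow (by omega)]
  · rw [pow_sub₀ y hy hn.le, pow_card_sub_one_eq_one y hy, one_mul, inv_pow]

theorem sum_inv_mul_one_sub_pow (hq : 2 < Fintype.card F) {B : ℕ} (hB : B < Fintype.card F) :
    ∑ x : F, x⁻¹ * (1 - x) ^ B = B := by
  classical
  -- the indicator compensates for `0⁻¹ = 0` at `x = 0`
  have hterm : ∀ x : F, x⁻¹ * (1 - x) ^ B
      = x⁻¹ - ∑ m ∈ range B, (1 - x) ^ m + if x = 0 then (B : F) else 0 := by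
    intro x
    rcases eq_or_ne x 0 with rfl | hx
    · simp
    · have hgeom : (1 - x) ^ B = 1 - x * ∑ m ∈ range B, (1 - x) ^ m := by
        linear_combination mul_neg_geom_sum (1 - x) B
      rw [if_neg hx, add_zero, hgeom, mul_sub, mul_one, inv_mul_cancel_left₀ hx]
  have hinv : ∑ x : F, x⁻¹ = 0 := by
    rw [Fintype.sum_bijective _ inv_involutive.bijective (fun x : F => x⁻¹) (fun x => x ^ 1)
      fun x => by rw [pow_one]]
    exact sum_pow_lt_card_sub_one F 1 (by omega)
  have hgeom : ∑ x : F, ∑ m ∈ range B, (1 - x) ^ m = 0 := by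
    rw [sum_comm]
    refine sum_eq_zero fun m hm => ?_
    rw [Fintype.sum_bijective _ (Equiv.subLeft (1 : F)).bijective (fun x => (1 - x) ^ m)
      (fun y => y ^ m) fun x => rfl]
    exact sum_pow_lt_card_sub_one F m (by rw [mem_range] at hm; omega)
  simp_rw [hterm, sum_add_distrib, sum_sub_distrib, hinv, hgeom, sum_ite_eq', mem_univ, if_true]
  ring

theorem sum_inv_mul_inv_one_sub_pow {i : ℕ} (hi2 : 2 ≤ i) (hi : i ≤ Fintype.card F - 2) :
    ∑ x : F, x⁻¹ * (1 - x)⁻¹ ^ (i - 1) = -i := by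
  have hpow : ∀ x : F, (1 - x)⁻¹ ^ (i - 1) = (1 - x) ^ (Fintype.card F - i) := fun x => by
    rw [inv_pow_eq_pow_card_sub_one_sub (1 - x) (by omega) (by omega)]
    congr 1
    omega
  simp_rw [hpow]
  rw [sum_inv_mul_one_sub_pow (by omega) (by omega), Nat.cast_sub (by omega), cast_card_eq_zero,
    zero_sub]

theorem sum_trace_mul_inv {p : ℕ} [Fact p.Prime] [Algebra (ZMod p) F] :
    ∑ x : F, algebraMap (ZMod p) F (Algebra.trace (ZMod p) F x) * x⁻¹ = -1 := by
  classical
  have hp := (Fact.out : p.Prime)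
  have hq : Fintype.card F = p ^ Module.finrank (ZMod p) F := by
    rw [Module.card_eq_pow_finrank (K := ZMod p), ZMod.card]
  have hn : Module.finrank (ZMod p) F ≠ 0 := (Module.finrank_pos (R := ZMod p) (M := F)).ne'
  simp_rw [algebraMap_trace_eq_sum_pow, Nat.card_zmod, sum_mul]
  set n := Module.finrank (ZMod p) F
  rw [sum_comm, ← Nat.sub_add_cancel (Nat.one_le_iff_ne_zero.2 hn), sum_range_succ']
  have hhigher : ∀ j ∈ range (n - 1), ∑ x : F, x ^ p ^ (j + 1) * x⁻¹ = 0 := by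
    intro j hj
    have hpj : 1 < p ^ (j + 1) := Nat.one_lt_pow j.succ_ne_zero hp.one_lt
    have hlt : p ^ (j + 1) < p ^ n :=
      Nat.pow_lt_pow_right hp.one_lt (by rw [mem_range] at hj; omega)
    rw [← sum_pow_lt_card_sub_one F (p ^ (j + 1) - 1) (by omega)]
    refine sum_congr rfl fun x _ => ?_
    rcases eq_or_ne x 0 with rfl | hx
    · rw [zero_pow (by omega), zero_pow (by omega), zero_mul]
    · rw [pow_sub₀ x hx hpj.le, pow_one]
  have hzero : ∑ x : F, x ^ p ^ 0 * x⁻¹ = -1 := by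
    simp_rw [pow_zero, pow_one]
    rw [← sum_erase_add _ _ (mem_univ 0), inv_zero, mul_zero, add_zero,
      sum_congr rfl fun x hx => mul_inv_cancel₀ (ne_of_mem_erase hx), sum_const,
      card_erase_of_mem (mem_univ 0), card_univ, nsmul_one,
      Nat.cast_sub (Fintype.card_pos (α := F)), cast_card_eq_zero, Nat.cast_one, zero_sub]
  rw [sum_eq_zero hhigher, zero_add, hzero]

end FiniteField

namespace AddValuation

section CommRing

variable {R Γ₀ : Type*} [CommRing R] [LinearOrderedAddCommMonoidWithTop Γ₀]
  (v : AddValuation R Γ₀)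

theorem map_natCast_nonneg (n : ℕ) : 0 ≤ v (n : R) := by
  rw [← nsmul_one, ← card_range n, ← sum_const]
  exact v.map_le_sum fun _ _ => v.map_one.ge

theorem map_geom_sum_nonneg {x : R} (hx : 0 ≤ v x) (n : ℕ) : 0 ≤ v (∑ i ∈ range n, x ^ i) :=
  v.map_le_sum fun i _ => by rw [v.map_pow]; exact nsmul_nonneg hx i

theorem two_nsmul_le_map_one_add_pow_sub {z : R} (hz : 0 ≤ v z) (t : ℕ) :
    2 • v z ≤ v ((1 + z) ^ t - 1 - t * z) := by
  induction t with
  | zero => simp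
  | succ t ih =>
    have h1 : 0 ≤ v (1 + z) := v.map_le_add v.map_one.ge hz
    have key : (1 + z) ^ (t + 1) - 1 - ((t + 1 : ℕ) : R) * z
        = (1 + z) * ((1 + z) ^ t - 1 - t * z) + t * z ^ 2 := by
      push_cast
      ring
    rw [key]
    refine v.map_le_add ?_ ?_
    · rw [v.map_mul]
      exact le_add_of_nonneg_of_le h1 ih
    · rw [v.map_mul, v.map_pow]
      exact le_add_of_nonneg_left (v.map_natCast_nonneg t)

theorem map_one_sub_le_map_one_sub_pow {x : R} (hx : 0 ≤ v x) (n : ℕ) :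
    v (1 - x) ≤ v (1 - x ^ n) := by
  rw [← mul_neg_geom_sum, v.map_mul]
  exact le_add_of_nonneg_right (v.map_geom_sum_nonneg hx n)

end CommRing

section Field

variable {K Γ₀ : Type*} [Field K] [LinearOrderedAddCommGroupWithTop Γ₀] (v : AddValuation K Γ₀)

theorem map_prod {ι : Type*} (s : Finset ι) (f : ι → K) :
    v (∏ i ∈ s, f i) = ∑ i ∈ s, v (f i) := by
  induction s using Finset.cons_induction with
  | empty => simp
  | cons a s ha ih => rw [prod_cons, sum_cons, v.map_mul, ih]

theorem map_eq_zero_of_pow_eq_one_s18 {ζ : K} {n : ℕ} (hn : n ≠ 0) (hζ : ζ ^ n = 1) : v ζ = 0 := by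
  have h : n • v ζ = 0 := by rw [← v.map_pow, hζ, v.map_one]
  rcases lt_trichotomy (v ζ) 0 with hlt | heq | hgt
  · exact absurd h (nsmul_neg hlt hn).ne
  · exact heq
  · exact absurd h (nsmul_pos hgt hn).ne'

theorem sub_one_nsmul_map_sub_one {p : ℕ} [Fact p.Prime] {ζ : K}
    (hζ : IsPrimitiveRoot ζ p) : (p - 1) • v (ζ - 1) = v p := by
  have hp := (Fact.out : p.Prime)
  have hroot : ∀ {μ : K}, IsPrimitiveRoot μ p → 0 ≤ v μ := fun hμ =>
    (v.map_eq_zero_of_pow_eq_one_s18 hp.ne_zero hμ.pow_eq_one).ge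
  have hsame : ∀ μ ∈ primitiveRoots p K, v (1 - μ) = v (1 - ζ) := fun μ hμ => by
    have hμ := (mem_primitiveRoots hp.pos).1 hμ
    obtain ⟨i, -, rfl⟩ := hζ.eq_pow_of_pow_eq_one hμ.pow_eq_one
    obtain ⟨j, -, hj⟩ := hμ.eq_pow_of_pow_eq_one hζ.pow_eq_one
    refine le_antisymm ?_ (v.map_one_sub_le_map_one_sub_pow (hroot hζ) i)
    simpa only [hj] using v.map_one_sub_le_map_one_sub_pow (hroot hμ) j
  have hprod : (p : K) = ∏ μ ∈ primitiveRoots p K, (1 - μ) := by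
    rw [← Polynomial.eval_one_cyclotomic_prime (R := K) (p := p),
      Polynomial.cyclotomic_eq_prod_X_sub_primitiveRoots hζ, Polynomial.eval_prod]
    simp
  rw [hprod, v.map_prod, sum_congr rfl hsame, sum_const, hζ.card_primitiveRoots,
    Nat.totient_prime hp, v.map_sub_swap]

theorem map_mul_inv_natCast_sub_one {n : ℕ} (hn0 : n ≠ 0) (hn : 0 < v n) (x : K) :
    v (x * ((n - 1 : ℕ) : K)⁻¹) = v x := by
  have h : v ((n - 1 : ℕ) : K) = 0 := by
    rw [Nat.cast_sub (Nat.one_le_iff_ne_zero.2 hn0), Nat.cast_one,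
      v.map_sub_eq_of_lt_right (v.map_one ▸ hn), v.map_one]
  rw [v.map_mul, v.map_inv, h, neg_zero, add_zero]

end Field

section Rat

variable {K : Type*} [Field K] (v : AddValuation K (WithTop ℚ))

noncomputable def ofMapMul (ν : K → WithTop ℚ) (hmul : ∀ x y, ν (x * y) = ν x + ν y)
    (hadd : ∀ x y, min (ν x) (ν y) ≤ ν (x + y)) (htop : ∀ x, ν x = ⊤ ↔ x = 0) :
    AddValuation K (WithTop ℚ) :=
  AddValuation.of ν ((htop 0).2 rfl) (by
    obtain ⟨r, hr⟩ := WithTop.ne_top_iff_exists.1 (mt (htop 1).1 one_ne_zero)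
    have h := hmul 1 1
    rw [one_mul, ← hr, ← WithTop.coe_add, WithTop.coe_eq_coe] at h
    rw [← hr, show r = 0 by linarith, WithTop.coe_zero]) hadd hmul

theorem map_sub_one_of_isPrimitiveRoot {p : ℕ} [hp : Fact p.Prime] {ζ : K}
    (hζ : IsPrimitiveRoot ζ p) (hvp : v p = 1) :
    v (ζ - 1) = ((1 / (p - 1) : ℚ) : WithTop ℚ) := by
  have h := v.sub_one_nsmul_map_sub_one hζ
  obtain ⟨r, hr⟩ := WithTop.ne_top_iff_exists.1
    ((v.ne_top_iff).2 (sub_ne_zero.2 (hζ.ne_one hp.out.one_lt)))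
  rw [hvp, ← hr, ← WithTop.coe_nsmul, ← WithTop.coe_one, WithTop.coe_eq_coe, nsmul_eq_mul,
    Nat.cast_sub hp.out.one_le, Nat.cast_one] at h
  have hp1 : (p : ℚ) - 1 ≠ 0 := sub_ne_zero.2 (by exact_mod_cast hp.out.one_lt.ne')
  rw [← hr, WithTop.coe_eq_coe, eq_div_iff hp1, mul_comm, h]

theorem map_neg_natCast_pow_mul_inv {p : ℕ} [hp : Fact p.Prime] (hvp : v p = 1) {e : ℕ}
    (he : e ≠ 0) :
    v (-((p ^ e : ℕ) : K) * ((p ^ e - 1 : ℕ) : K)⁻¹)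
      = (((p.digits (p ^ e - 1)).sum / (p - 1) : ℚ) : WithTop ℚ) := by
  have hq : v (p ^ e : ℕ) = (e : ℚ) := by
    rw [Nat.cast_pow, v.map_pow, hvp, ← WithTop.coe_one, ← WithTop.coe_nsmul, nsmul_one]
  have hp1 : (p : ℚ) - 1 ≠ 0 := sub_ne_zero.2 (by exact_mod_cast hp.out.one_lt.ne')
  rw [v.map_mul_inv_natCast_sub_one (pow_ne_zero e hp.out.ne_zero)
      (hq ▸ WithTop.coe_pos.2 (by exact_mod_cast Nat.pos_of_ne_zero he)),
    v.map_neg, hq, Nat.digits_sum_pow_sub_one hp.out.one_lt, WithTop.coe_eq_coe, Nat.cast_mul,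
    Nat.cast_sub hp.out.one_le, Nat.cast_one, mul_div_assoc, div_self hp1, mul_one]

end Rat

section Lift

variable {F K : Type*} [Field F] [Field K] {v : AddValuation K (WithTop ℚ)} {T : F →*₀ K}

theorem map_monoidWithZeroHom_eq_zero [Finite F] (v : AddValuation K (WithTop ℚ)) (T : F →*₀ K)
    {x : F} (hx : x ≠ 0) : v (T x) = 0 := by
  have := Fintype.ofFinite F
  exact v.map_eq_zero_of_pow_eq_one_s18 (Nat.sub_ne_zero_of_lt Fintype.one_lt_card)
    (by rw [← _root_.map_pow, FiniteField.pow_card_sub_one_eq_one x hx, _root_.map_one])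

theorem map_monoidWithZeroHom_nonneg [Finite F] (v : AddValuation K (WithTop ℚ)) (T : F →*₀ K)
    (x : F) : 0 ≤ v (T x) := by
  rcases eq_or_ne x 0 with rfl | hx
  · simp
  · exact (v.map_monoidWithZeroHom_eq_zero T hx).ge

theorem lt_map_sum_sub_map_sum (hT : ∀ x y, 0 < v (T (x + y) - T x - T y)) {ι : Type*}
    (s : Finset ι) (f : ι → F) : 0 < v (∑ i ∈ s, T (f i) - T (∑ i ∈ s, f i)) := by
  induction s using Finset.cons_induction with
  | empty => simp
  | cons a s ha ih =>
    have key : ∑ i ∈ s.cons a ha, T (f i) - T (∑ i ∈ s.cons a ha, f i)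
        = (∑ i ∈ s, T (f i) - T (∑ i ∈ s, f i))
          - (T (f a + ∑ i ∈ s, f i) - T (f a) - T (∑ i ∈ s, f i)) := by
      rw [sum_cons, sum_cons]
      ring
    rw [key]
    exact lt_of_lt_of_le (lt_min ih (hT _ _)) (v.map_sub _ _)

theorem lt_map_natCast_sub (hT : ∀ x y, 0 < v (T (x + y) - T x - T y)) (n : ℕ) :
    0 < v ((n : K) - T n) := by
  simpa using lt_map_sum_sub_map_sum hT (range n) fun _ => (1 : F)

theorem map_sum_eq_zero_of_lt_map_sub [Finite F] (hT : ∀ x y, 0 < v (T (x + y) - T x - T y))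
    {ι : Type*} {s : Finset ι} {a : ι → K} {c : ι → F}
    (hac : ∀ i ∈ s, 0 < v (a i - T (c i))) (hc : ∑ i ∈ s, c i ≠ 0) :
    v (∑ i ∈ s, a i) = 0 := by
  have hTc := v.map_monoidWithZeroHom_eq_zero T hc
  rw [← hTc]
  refine v.map_eq_of_lt_sub ?_
  have key : ∑ i ∈ s, a i - T (∑ i ∈ s, c i)
      = ∑ i ∈ s, (a i - T (c i)) + (∑ i ∈ s, T (c i) - T (∑ i ∈ s, c i)) := by
    rw [sum_sub_distrib]
    ring
  rw [hTc, key]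
  exact lt_of_lt_of_le (lt_min (v.map_lt_sum' (WithTop.coe_lt_top 0) hac)
    (lt_map_sum_sub_map_sum hT s c)) (v.map_add _ _)

end Lift

end AddValuation

namespace MonoidWithZeroHom

section CommMonoidWithZero

variable {F K : Type*} [Field F] [CommMonoidWithZero K]

def toMulChar (T : F →*₀ K) : MulChar F K where
  toMonoidHom := T.toMonoidHom
  map_nonunit' x hx := by
    rw [isUnit_iff_ne_zero, not_not] at hx
    simp [hx]

@[simp]
theorem toMulChar_apply (T : F →*₀ K) (x : F) : T.toMulChar x = T x := rfl

end CommMonoidWithZero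

variable {F K : Type*} [Field F] [Field K] (T : F →*₀ K)

theorem toMulChar_inv_pow_apply {n : ℕ} (hn : n ≠ 0) (x : F) :
    (T.toMulChar⁻¹ ^ n) x = T (x⁻¹ ^ n) := by
  rw [MulChar.pow_apply' _ hn, MulChar.inv_apply', toMulChar_apply, _root_.map_pow]

theorem toMulChar_inv_pow_apply_of_ne_zero (n : ℕ) {x : F} (hx : x ≠ 0) :
    (T.toMulChar⁻¹ ^ n) x = (T x)⁻¹ ^ n := by
  rw [← IsUnit.unit_spec (Ne.isUnit hx), MulChar.pow_apply_coe, MulChar.inv_apply',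
    toMulChar_apply, map_inv₀]

theorem dvd_of_toMulChar_inv_pow_eq_one [Fintype F] (hTinj : Function.Injective T) {n : ℕ}
    (hn : T.toMulChar⁻¹ ^ n = 1) : Fintype.card F - 1 ∣ n := by
  classical
  rw [← Fintype.card_units, ← Nat.card_eq_fintype_card, ← IsCyclic.exponent_eq_card]
  refine Monoid.exponent_dvd_of_forall_pow_eq_one fun a => Units.val_injective (hTinj ?_)
  have h : (T.toMulChar⁻¹ ^ n) ((a⁻¹ : Fˣ) : F) = 1 := by rw [hn, MulChar.one_apply_coe]
  rw [MulChar.pow_apply_coe, MulChar.inv_apply', Units.val_inv_eq_inv_val, inv_inv,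
    toMulChar_apply] at h
  rw [Units.val_pow_eq_pow_val, _root_.map_pow, h, Units.val_one, _root_.map_one]

end MonoidWithZeroHom

section TraceAddChar

variable {p : ℕ} [Fact p.Prime] (F : Type*) [Field F] [Algebra (ZMod p) F] {K : Type*} [Field K]
  {ξ : K}

noncomputable def traceAddChar (hξ : ξ ^ p = 1) : AddChar F K :=
  (AddChar.zmodChar p hξ).compAddMonoidHom (Algebra.trace (ZMod p) F).toAddMonoidHom

variable {F}

theorem traceAddChar_apply (hξ : ξ ^ p = 1) (x : F) :
    traceAddChar F hξ x = ξ ^ (Algebra.trace (ZMod p) F x).val := rfl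

theorem traceAddChar_ne_one [Finite F] (hξ : IsPrimitiveRoot ξ p) :
    traceAddChar F hξ.pow_eq_one ≠ 1 := by
  obtain ⟨x, hx⟩ := Algebra.trace_surjective (ZMod p) F 1
  refine AddChar.ne_one_iff.2 ⟨x, ?_⟩
  rw [traceAddChar_apply, hx, ZMod.val_one, pow_one]
  exact hξ.ne_one (Fact.out : p.Prime).one_lt

theorem traceAddChar_apply_pow_char [Finite F] (hξ : ξ ^ p = 1) (x : F) :
    traceAddChar F hξ (x ^ p) = traceAddChar F hξ x := by
  have := Fintype.ofFinite F
  have hfrob :=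
    Algebra.trace_eq_of_algEquiv (FiniteField.frobeniusAlgEquivOfAlgebraic (ZMod p) F) x
  rw [FiniteField.coe_frobeniusAlgEquivOfAlgebraic, ZMod.card] at hfrob
  rw [traceAddChar_apply, traceAddChar_apply, hfrob]

end TraceAddChar

theorem gaussSum_pow_char {p : ℕ} [Fact p.Prime] {F K : Type*} [Field F] [Fintype F] [CharP F p]
    [CommRing K] (χ : MulChar F K) {ψ : AddChar F K} (hψ : ∀ x, ψ (x ^ p) = ψ x) :
    gaussSum (χ ^ p) ψ = gaussSum χ ψ := by
  have hfrob : Function.Bijective (fun x : F => x ^ p) :=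
    Finite.injective_iff_bijective.1 (frobenius_inj F p)
  refine Fintype.sum_bijective _ hfrob _ _ fun x => ?_
  rw [MulChar.pow_apply' χ (Fact.out : p.Prime).ne_zero, _root_.map_pow, hψ]

theorem gaussSum_toMulChar_inv_pow_eq_sum {F K : Type*} [Field F] [Fintype F] [DecidableEq F]
    [Field K] (T : F →*₀ K) (ψ : AddChar F K) (i : ℕ) :
    gaussSum (T.toMulChar⁻¹ ^ i) ψ = ∑ x ∈ univ \ {0}, ψ x * (T x)⁻¹ ^ i := by
  rw [gaussSum, ← sum_sdiff (subset_univ {0}), sum_singleton, MulChar.map_zero, zero_mul,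
    add_zero]
  refine sum_congr rfl fun x hx => ?_
  rw [T.toMulChar_inv_pow_apply_of_ne_zero i (by simpa using hx), mul_comm]

namespace AddValuation

variable {p : ℕ} [Fact p.Prime] {F K : Type*} [Field F] [Fintype F] [Algebra (ZMod p) F]
  [Field K] {v : AddValuation K (WithTop ℚ)} {T : F →*₀ K} {ξ : K}

theorem map_sum_trace_mul_toMulChar_inv (hT : ∀ x y, 0 < v (T (x + y) - T x - T y)) :
    v (∑ x : F, ((Algebra.trace (ZMod p) F x).val : K) * T.toMulChar⁻¹ x) = 0 := by
  refine map_sum_eq_zero_of_lt_map_sub hT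
    (c := fun x => ((Algebra.trace (ZMod p) F x).val : F) * x⁻¹) (fun x _ => ?_) ?_
  · rw [MulChar.inv_apply', MonoidWithZeroHom.toMulChar_apply, _root_.map_mul, ← sub_mul,
      v.map_mul]
    exact (lt_map_natCast_sub hT _).trans_le
      (le_add_of_nonneg_right (v.map_monoidWithZeroHom_nonneg T _))
  · simp_rw [← map_natCast (algebraMap (ZMod p) F), ZMod.natCast_zmod_val]
    rw [FiniteField.sum_trace_mul_inv]
    exact neg_ne_zero.2 one_ne_zero

theorem map_gaussSum_toMulChar_inv (hT : ∀ x y, 0 < v (T (x + y) - T x - T y))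
    (hTinj : Function.Injective T) (hq : 2 < Fintype.card F) (hξ : IsPrimitiveRoot ξ p)
    (hπ : 0 < v (ξ - 1)) :
    v (gaussSum T.toMulChar⁻¹ (traceAddChar F hξ.pow_eq_one)) = v (ξ - 1) := by
  set π := ξ - 1
  set t : F → ℕ := fun x => (Algebra.trace (ZMod p) F x).val
  set ω := T.toMulChar⁻¹
  have hω : ω ≠ 1 := fun h => by
    have := Nat.le_of_dvd one_pos (T.dvd_of_toMulChar_inv_pow_eq_one hTinj (n := 1)
      (by rwa [pow_one]))
    omega
  have hsplit : gaussSum ω (traceAddChar F hξ.pow_eq_one)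
      = ∑ x, ω x + π * ∑ x, (t x : K) * ω x + ∑ x, ω x * ((1 + π) ^ t x - 1 - t x * π) := by
    simp_rw [gaussSum, traceAddChar_apply, mul_sum, ← sum_add_distrib]
    refine sum_congr rfl fun x _ => ?_
    rw [show (1 : K) + π = ξ by ring]
    ring
  have hmain : v (π * ∑ x, (t x : K) * ω x) = v π := by
    rw [v.map_mul, map_sum_trace_mul_toMulChar_inv hT, add_zero]
  have herror : 2 • v π ≤ v (∑ x, ω x * ((1 + π) ^ t x - 1 - t x * π)) :=
    v.map_le_sum fun x _ => by
      rw [v.map_mul, MulChar.inv_apply', MonoidWithZeroHom.toMulChar_apply]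
      exact le_add_of_nonneg_of_le (v.map_monoidWithZeroHom_nonneg T _)
        (v.two_nsmul_le_map_one_add_pow_sub hπ.le _)
  have hlt : v π < 2 • v π := by
    have hπ0 : π ≠ 0 := sub_ne_zero.2 (hξ.ne_one (Fact.out : p.Prime).one_lt)
    rw [two_nsmul]
    simpa using WithTop.add_lt_add_left (v.ne_top_iff.2 hπ0) hπ
  rw [hsplit, MulChar.sum_eq_zero_of_ne_one hω, zero_add,
    v.map_add_eq_of_lt_left (hmain ▸ lt_of_lt_of_le hlt herror), hmain]

theorem map_jacobiSum_toMulChar_inv_pow (hT : ∀ x y, 0 < v (T (x + y) - T x - T y)) {i : ℕ}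
    (hi2 : 2 ≤ i) (hi : i ≤ Fintype.card F - 2) (hpi : ¬ p ∣ i) :
    v (jacobiSum T.toMulChar⁻¹ (T.toMulChar⁻¹ ^ (i - 1))) = 0 := by
  have := charP_of_injective_algebraMap (algebraMap (ZMod p) F).injective p
  have hJ : jacobiSum T.toMulChar⁻¹ (T.toMulChar⁻¹ ^ (i - 1))
      = ∑ x : F, T (x⁻¹ * (1 - x)⁻¹ ^ (i - 1)) := by
    refine sum_congr rfl fun x _ => ?_
    rw [MulChar.inv_apply', MonoidWithZeroHom.toMulChar_apply,
      T.toMulChar_inv_pow_apply (by omega), _root_.map_mul]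
  rw [hJ]
  refine map_sum_eq_zero_of_lt_map_sub hT (c := fun x => x⁻¹ * (1 - x)⁻¹ ^ (i - 1))
    (fun x _ => by simp) ?_
  rw [FiniteField.sum_inv_mul_inv_one_sub_pow hi2 hi, neg_ne_zero]
  exact fun h => hpi ((CharP.cast_eq_zero_iff F p i).1 h)

theorem map_gaussSum_toMulChar_inv_pow (hT : ∀ x y, 0 < v (T (x + y) - T x - T y))
    (hTinj : Function.Injective T) (hξ : IsPrimitiveRoot ξ p) (hπ : 0 < v (ξ - 1)) {i : ℕ}
    (hi : i ≤ Fintype.card F - 2) :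
    v (gaussSum (T.toMulChar⁻¹ ^ i) (traceAddChar F hξ.pow_eq_one))
      = (p.digits i).sum • v (ξ - 1) := by
  have hp := (Fact.out : p.Prime)
  have := charP_of_injective_algebraMap (algebraMap (ZMod p) F).injective p
  set ψ := traceAddChar F hξ.pow_eq_one
  set ω := T.toMulChar⁻¹
  induction i using Nat.strong_induction_on with
  | _ i ih =>
  rcases Nat.eq_zero_or_pos i with rfl | hi0
  · rw [pow_zero, gaussSum_one_left (traceAddChar_ne_one hξ), v.map_neg, v.map_one]
    simp
  by_cases hpi : p ∣ i
  · obtain ⟨m, rfl⟩ := hpi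
    have hm : m < p * m :=
      lt_mul_left (Nat.pos_of_ne_zero fun h => by simp [h] at hi0) hp.one_lt
    rw [mul_comm p m, pow_mul, gaussSum_pow_char _ (traceAddChar_apply_pow_char _),
      mul_comm m p, Nat.digits_sum_base_mul hp.one_lt]
    exact ih m hm (by omega)
  rcases eq_or_lt_of_le (Nat.one_le_iff_ne_zero.2 hi0.ne') with rfl | hi1
  · rw [pow_one, map_gaussSum_toMulChar_inv hT hTinj (by omega) hξ hπ,
      Nat.digits_of_lt p 1 one_ne_zero hp.one_lt, List.sum_singleton, one_nsmul]
  have hωi : ω * ω ^ (i - 1) ≠ 1 := by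
    rw [← pow_succ', Nat.sub_add_cancel hi0]
    intro h
    have := Nat.le_of_dvd hi0 (T.dvd_of_toMulChar_inv_pow_eq_one hTinj h)
    omega
  have hmul := congrArg v (jacobiSum_mul_nontrivial hωi ψ)
  rw [← pow_succ', Nat.sub_add_cancel hi0, v.map_mul, v.map_mul,
    map_jacobiSum_toMulChar_inv_pow hT hi1 hi hpi, add_zero,
    map_gaussSum_toMulChar_inv hT hTinj (by omega) hξ hπ,
    ih (i - 1) (by omega) (by omega)] at hmul
  rw [hmul, Nat.digits_sum_eq_digits_sum_sub_one_add_one hp.one_lt hpi, add_nsmul, one_nsmul,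
    add_comm]

theorem map_gaussSum_toMulChar_inv_pow_eq_digits_sum_div (hvp : v p = 1)
    (hT : ∀ x y, 0 < v (T (x + y) - T x - T y)) (hTinj : Function.Injective T)
    (hξ : IsPrimitiveRoot ξ p) {i : ℕ} (hi : i ≤ Fintype.card F - 2) :
    v (gaussSum (T.toMulChar⁻¹ ^ i) (traceAddChar F hξ.pow_eq_one))
      = (((p.digits i).sum / (p - 1) : ℚ) : WithTop ℚ) := by
  have hπ := v.map_sub_one_of_isPrimitiveRoot hξ hvp
  have hp1 : (1 : ℚ) < p := by exact_mod_cast (Fact.out : p.Prime).one_lt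
  rw [map_gaussSum_toMulChar_inv_pow hT hTinj hξ
      (hπ ▸ WithTop.coe_pos.2 (one_div_pos.2 (sub_pos.2 hp1))) hi,
    hπ, ← WithTop.coe_nsmul, nsmul_eq_mul, mul_one_div]

end AddValuation

theorem stmt_18_general (p e : ℕ) [Fact p.Prime]
    (F : Type) [Field F] [Fintype F] [DecidableEq F] [Algebra (ZMod p) F]
    (hF : Fintype.card F = p ^ e)
    (ξp : CyclotomicField (p * (p ^ e - 1)) ℚ_[p])
    (hξp : IsPrimitiveRoot ξp p)
    (ν : CyclotomicField (p * (p ^ e - 1)) ℚ_[p] → WithTop ℚ)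
    (hν_mul : ∀ x y, ν (x * y) = ν x + ν y)
    (hν_add : ∀ x y, min (ν x) (ν y) ≤ ν (x + y))
    (hν_top : ∀ x, ν x = ⊤ ↔ x = 0)
    (hν_ext : ∀ a : ℚ_[p], a ≠ 0 →
      ν (algebraMap ℚ_[p] (CyclotomicField (p * (p ^ e - 1)) ℚ_[p]) a)
        = ((a.valuation : ℚ) : WithTop ℚ))
    (T : F → CyclotomicField (p * (p ^ e - 1)) ℚ_[p])
    (hT0 : T 0 = 0)
    (hTmul : ∀ x y, T (x * y) = T x * T y)
    (hTinj : Function.Injective T)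
    (hTadd : ∀ x y, (0 : WithTop ℚ) < ν (T (x + y) - T x - T y))
    (g : ℕ → CyclotomicField (p * (p ^ e - 1)) ℚ_[p])
    (hg : ∀ i, g i = ∑ x ∈ (Finset.univ \ {0} : Finset F),
        ξp ^ (Algebra.trace (ZMod p) F x).val * (T x)⁻¹ ^ i)
    (lam : ℕ → CyclotomicField (p * (p ^ e - 1)) ℚ_[p])
    (hlam : ∀ i, lam i = if i = 0 then 1 else if i = p ^ e - 1
        then -((p ^ e : ℕ) : CyclotomicField (p * (p ^ e - 1)) ℚ_[p])
          * (((p ^ e - 1 : ℕ) : CyclotomicField (p * (p ^ e - 1)) ℚ_[p]))⁻¹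
        else g i * (((p ^ e - 1 : ℕ) : CyclotomicField (p * (p ^ e - 1)) ℚ_[p]))⁻¹) :
    (∀ i ≤ p ^ e - 2, ν (g i) = ((((Nat.digits p i).sum : ℚ) / ((p : ℚ) - 1) : ℚ) : WithTop ℚ)) ∧
    (∀ i ≤ p ^ e - 1, ν (lam i) = ((((Nat.digits p i).sum : ℚ) / ((p : ℚ) - 1) : ℚ) : WithTop ℚ)) := by
  have hp := (Fact.out : p.Prime)
  let v := AddValuation.ofMapMul ν hν_mul hν_add hν_top
  have hvp : v p = 1 := by
    show ν p = 1
    simpa [Padic.valuation_p] using hν_ext p (Nat.cast_ne_zero.2 hp.ne_zero)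
  have hT1 : T 1 = 1 :=
    mul_left_cancel₀ (hT0 ▸ hTinj.ne one_ne_zero) (by rw [← hTmul, mul_one, mul_one])
  let T' : F →*₀ _ := { toFun := T, map_zero' := hT0, map_one' := hT1, map_mul' := hTmul }
  change (∀ i ≤ p ^ e - 2, v (g i) = _) ∧ (∀ i ≤ p ^ e - 1, v (lam i) = _)
  have hgauss (i : ℕ) (hi : i ≤ p ^ e - 2) :
      v (g i) = (((p.digits i).sum / (p - 1) : ℚ) : WithTop ℚ) := by
    have h := v.map_gaussSum_toMulChar_inv_pow_eq_digits_sum_div (T := T') hvp hTadd hTinj hξp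
      (hF ▸ hi)
    rw [gaussSum_toMulChar_inv_pow_eq_sum T'] at h
    rw [hg]
    exact h
  have he : e ≠ 0 := by
    rintro rfl
    simpa [hF] using Fintype.one_lt_card (α := F)
  refine ⟨hgauss, fun i hi => ?_⟩
  rw [hlam]
  split_ifs with h0 hq1
  · simp [h0]
  · rw [hq1]
    exact v.map_neg_natCast_pow_mul_inv hvp he
  · have hq : 0 < v (p ^ e : ℕ) := by
      rw [Nat.cast_pow, v.map_pow, hvp, ← WithTop.coe_one, ← WithTop.coe_nsmul, WithTop.coe_pos,
        nsmul_one]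
      exact_mod_cast Nat.pos_of_ne_zero he
    rw [v.map_mul_inv_natCast_sub_one (pow_ne_zero e hp.ne_zero) hq]
    exact hgauss i (by omega)

/-- **Stickelberger's theorem.**  Let `p` be a prime and `q = p^e`.
For `0 ≤ i ≤ q−2`, the Gauss sum `g(T^{−i}) = ∑_{x ∈ 𝔽_q^×} ξ_p^{Tr_{q/p}(x)} T(x)^{−i}`
has `p`-adic valuation `S_p(i)/(p−1)`; consequently the coefficients
`λ_0 = 1`, `λ_i = g(T^{−i})/(q−1)` for `1 ≤ i ≤ q−2`, `λ_{q−1} = −q/(q−1)` satisfy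
`ν_p(λ_i) = S_p(i)/(p−1)` for all `0 ≤ i ≤ q−1`.

Here `ℚ_p(ξ_{p(q−1)})` is realized as `CyclotomicField (p(q−1)) ℚ_[p]`, `ξ_p` is a
primitive `p`-th root of unity therein, the (unique) extension `ν` of the `p`-adic
valuation is axiomatized by the hypotheses `hν_*`, and the Teichmüller lift `T`
by the hypotheses `hT*` (in particular `hTadd` expresses `T(x) ≡ x (mod 𝔪)`
compatibly with addition, i.e. that `T` reduces to a field embedding). -/
theorem stmt_18 (p e : ℕ) [Fact p.Prime] (he : 1 ≤ e)
    (hpos : 0 < p * (p ^ e - 1))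
    (F : Type) [Field F] [Fintype F] [DecidableEq F] [Algebra (ZMod p) F]
    (hF : Fintype.card F = p ^ e)
    (ξp : CyclotomicField (p * (p ^ e - 1)) ℚ_[p])
    (hξp : IsPrimitiveRoot ξp p)
    (ν : CyclotomicField (p * (p ^ e - 1)) ℚ_[p] → WithTop ℚ)
    (hν_mul : ∀ x y, ν (x * y) = ν x + ν y)
    (hν_add : ∀ x y, min (ν x) (ν y) ≤ ν (x + y))
    (hν_top : ∀ x, ν x = ⊤ ↔ x = 0)
    (hν_ext : ∀ a : ℚ_[p], a ≠ 0 →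
      ν (algebraMap ℚ_[p] (CyclotomicField (p * (p ^ e - 1)) ℚ_[p]) a)
        = ((a.valuation : ℚ) : WithTop ℚ))
    (T : F → CyclotomicField (p * (p ^ e - 1)) ℚ_[p])
    (hT0 : T 0 = 0)
    (hTmul : ∀ x y, T (x * y) = T x * T y)
    (hTq : ∀ x, T x ^ (p ^ e) = T x)
    (hTinj : Function.Injective T)
    (hTadd : ∀ x y, (0 : WithTop ℚ) < ν (T (x + y) - T x - T y))
    (g : ℕ → CyclotomicField (p * (p ^ e - 1)) ℚ_[p])
    (hg : ∀ i, g i = ∑ x ∈ (Finset.univ \ {0} : Finset F),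
        ξp ^ (Algebra.trace (ZMod p) F x).val * (T x)⁻¹ ^ i)
    (lam : ℕ → CyclotomicField (p * (p ^ e - 1)) ℚ_[p])
    (hlam : ∀ i, lam i = if i = 0 then 1 else if i = p ^ e - 1
        then -((p ^ e : ℕ) : CyclotomicField (p * (p ^ e - 1)) ℚ_[p])
          * (((p ^ e - 1 : ℕ) : CyclotomicField (p * (p ^ e - 1)) ℚ_[p]))⁻¹
        else g i * (((p ^ e - 1 : ℕ) : CyclotomicField (p * (p ^ e - 1)) ℚ_[p]))⁻¹) :
    (∀ i ≤ p ^ e - 2, ν (g i) = ((((Nat.digits p i).sum : ℚ) / ((p : ℚ) - 1) : ℚ) : WithTop ℚ)) ∧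
    (∀ i ≤ p ^ e - 1, ν (lam i) = ((((Nat.digits p i).sum : ℚ) / ((p : ℚ) - 1) : ℚ) : WithTop ℚ)) :=
  stmt_18_general p e F hF ξp hξp ν hν_mul hν_add hν_top hν_ext T hT0 hTmul hTinj hTadd g hg lam
    hlam
end

section
/- Let p be a prime and q = p^e. Define λ_0 = 1, λ_i = g(T^{−i})/(q−1) for 1 ≤ i ≤ q−2, and λ_{q−1} = −q/(q−1), where g(T^{−i}) is the Gauss sum. Then for all x ∈ 𝔽_q, ξ_p^{Tr_{q/p}(x)} = ∑_{i=0}^{q−1} λ_i T(x)^i, and this expansion is unique: if μ_0,…,μ_{q−1} ∈ ℚ_p(ξ_{p(q−1)}) satisfy ξ_p^{Tr_{q/p}(x)} = ∑_{i=0}^{q−1} μ_i T(x)^i for all x ∈ 𝔽_q, then μ_i = λ_i for all i. -/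
/-!
For `x ≠ 0` the values `T x` are `q - 1` distinct roots of `X ^ (q - 1) = 1`, so the
characters `i ↦ T(x)^i` of `ℤ/(q-1)` are orthogonal and discrete Fourier inversion gives
`(q - 1) f(x) = ∑_{i < q-1} ĝ(i) T(x)^i` for every `f : 𝔽_q → K`, where
`ĝ(i) = ∑_{y ≠ 0} f(y) T(y)^{-i}`. Since `T(x)^{q-1}` is `1` for `x ≠ 0` and `0` for
`x = 0`, moving part of the constant term to degree `q - 1` also matches `f(0)`. For the
additive character `f = ψ` one has `ĝ(0) = -ψ(0) = -1`, because `ψ` sums to zero over `𝔽_q`;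
this turns the coefficients into the `λ_i`. Uniqueness holds because a polynomial of degree
`< q` vanishing at the `q` distinct points `T(x)` is zero.
-/

open Finset

namespace Teichmuller

section

variable {F K : Type*} [Fintype F] [CommRing K] [IsDomain K] {T : F → K}

lemma eq_of_forall_sum_mul_pow_eq (hTinj : Function.Injective T) {a b : ℕ → K}
    (h : ∀ x, ∑ i ∈ range (Fintype.card F), a i * T x ^ i
      = ∑ i ∈ range (Fintype.card F), b i * T x ^ i) {i : ℕ} (hi : i < Fintype.card F) :
    a i = b i := by
  open Polynomial in
  let P : K[X] := ∑ j ∈ range (Fintype.card F), C (a j - b j) * X ^ j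
  have hP : P = 0 := by
    refine eq_zero_of_natDegree_lt_card_of_eval_eq_zero _ hTinj (fun x ↦ ?_) ?_
    · simp only [P, eval_finsetSum, eval_mul, eval_C, eval_pow, eval_X, sub_mul, sum_sub_distrib]
      exact sub_eq_zero.mpr (h x)
    · refine (natDegree_sum_le_of_forall_le _ _ fun j hj ↦ ?_).trans_lt
        (Nat.sub_one_lt (by omega))
      exact (natDegree_C_mul_X_pow_le _ _).trans (Nat.le_sub_one_of_lt (mem_range.mp hj))
  have := congrArg (coeff · i) hP
  simp only [P, finsetSum_coeff, coeff_C_mul_X_pow, coeff_zero] at this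
  simpa [sub_eq_zero, hi] using this

end

variable {F K : Type*} [Fintype F] [Zero F] [Field K] {T : F → K}

lemma pow_card_sub_one_eq_one (hT0 : T 0 = 0) (hTinj : Function.Injective T)
    (hTq : ∀ x, T x ^ Fintype.card F = T x) {x : F} (hx : x ≠ 0) :
    T x ^ (Fintype.card F - 1) = 1 := by
  refine mul_right_cancel₀ ((hTinj.ne_iff' hT0).mpr hx) ?_
  rw [one_mul, ← pow_succ, Nat.sub_add_cancel Fintype.card_pos, hTq]

lemma sum_pow_mul_inv_pow_eq_zero (hT0 : T 0 = 0) (hTinj : Function.Injective T)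
    (hTq : ∀ x, T x ^ Fintype.card F = T x) {x y : F} (hx : x ≠ 0) (hy : y ≠ 0)
    (hxy : y ≠ x) :
    ∑ i ∈ range (Fintype.card F - 1), (T x * (T y)⁻¹) ^ i = 0 := by
  have hne : T x * (T y)⁻¹ ≠ 1 := fun h ↦
    hxy (hTinj ((mul_inv_eq_one₀ ((hTinj.ne_iff' hT0).mpr hy)).mp h)).symm
  rw [geom_sum_eq hne, mul_pow, inv_pow, pow_card_sub_one_eq_one hT0 hTinj hTq hx,
    pow_card_sub_one_eq_one hT0 hTinj hTq hy, inv_one, mul_one, sub_self, zero_div]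

variable [DecidableEq F]

/-- For `f = ψ` this is the Gauss sum `g(T^{-i})`. -/
def gaussCoeff (T : F → K) (f : F → K) (i : ℕ) : K :=
  ∑ y ∈ univ \ {0}, f y * (T y)⁻¹ ^ i

def expansionCoeff (T : F → K) (f : F → K) (i : ℕ) : K :=
  if i = 0 then f 0
  else if i = Fintype.card F - 1 then gaussCoeff T f 0 / (Fintype.card F - 1 : ℕ) - f 0
  else gaussCoeff T f i / (Fintype.card F - 1 : ℕ)

lemma gaussCoeff_zero (f : F → K) : gaussCoeff T f 0 = ∑ x, f x - f 0 := by
  rw [gaussCoeff, ← sum_sdiff (subset_univ {0}), sum_singleton]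
  simp

lemma sum_gaussCoeff_mul_pow (hT0 : T 0 = 0) (hTinj : Function.Injective T)
    (hTq : ∀ x, T x ^ Fintype.card F = T x) (f : F → K) {x : F} (hx : x ≠ 0) :
    ∑ i ∈ range (Fintype.card F - 1), gaussCoeff T f i * T x ^ i
      = (Fintype.card F - 1 : ℕ) * f x := by
  have hx' : x ∈ univ \ {0} := by simp [hx]
  calc ∑ i ∈ range (Fintype.card F - 1), gaussCoeff T f i * T x ^ i
      = ∑ y ∈ univ \ {0},
          f y * ∑ i ∈ range (Fintype.card F - 1), (T x * (T y)⁻¹) ^ i := by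
        simp only [gaussCoeff, sum_mul, mul_sum, mul_pow]
        rw [sum_comm]
        exact sum_congr rfl fun _ _ ↦ sum_congr rfl fun _ _ ↦ by ring
    _ = f x * ∑ i ∈ range (Fintype.card F - 1), (T x * (T x)⁻¹) ^ i := by
        refine sum_eq_single_of_mem x hx' fun y hy hyx ↦ ?_
        rw [sum_pow_mul_inv_pow_eq_zero hT0 hTinj hTq hx (by simpa using hy) hyx, mul_zero]
    _ = (Fintype.card F - 1 : ℕ) * f x := by
        rw [mul_inv_cancel₀ ((hTinj.ne_iff' hT0).mpr hx)]
        simp [mul_comm]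

lemma eq_sum_expansionCoeff_mul_pow (hT0 : T 0 = 0) (hTinj : Function.Injective T)
    (hTq : ∀ x, T x ^ Fintype.card F = T x) (hq : ((Fintype.card F - 1 : ℕ) : K) ≠ 0)
    (f : F → K) (x : F) :
    f x = ∑ i ∈ range (Fintype.card F), expansionCoeff T f i * T x ^ i := by
  obtain ⟨n, hcard⟩ : ∃ n, Fintype.card F = n + 1 :=
    ⟨_, (Nat.sub_add_cancel Fintype.card_pos).symm⟩
  have hgauss := sum_gaussCoeff_mul_pow hT0 hTinj hTq f (x := x)
  simp only [expansionCoeff, hcard, Nat.add_sub_cancel] at hq hgauss ⊢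
  rcases eq_or_ne x 0 with rfl | hx
  · rw [sum_eq_single_of_mem 0 (by simp) fun i _ hi ↦ by rw [hT0, zero_pow hi, mul_zero]]
    simp
  have hn : n ≠ 0 := fun h ↦ hq (by simp [h])
  have hbulk : ∑ i ∈ range n, (if i = 0 then f 0 else if i = n then gaussCoeff T f 0 / n - f 0
        else gaussCoeff T f i / n) * T x ^ i
      = ∑ i ∈ range n, gaussCoeff T f i / n * T x ^ i + (f 0 - gaussCoeff T f 0 / n) := by
    rw [← sub_eq_iff_eq_add', ← sum_sub_distrib,
      sum_eq_single_of_mem 0 (by simpa [pos_iff_ne_zero]) fun i hi hi0 ↦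
        by simp [hi0, (mem_range.mp hi).ne]]
    simp
  have hTn : T x ^ n = 1 := by simpa [hcard] using pow_card_sub_one_eq_one hT0 hTinj hTq hx
  rw [sum_range_succ, hbulk, hTn]
  simp only [hn, if_false, if_true, mul_one, div_mul_eq_mul_div, ← sum_div, hgauss hx,
    mul_div_cancel_left₀ _ hq]
  ring

end Teichmuller

lemma sum_pow_trace_val_eq_zero {K F : Type*} [Field K] {p : ℕ} [Fact p.Prime] [Field F]
    [Fintype F] [Algebra (ZMod p) F] {ξ : K} (hξ : IsPrimitiveRoot ξ p) :
    ∑ x : F, ξ ^ (Algebra.trace (ZMod p) F x).val = 0 := by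
  have : Module.Finite (ZMod p) F := Module.finite_iff_finite.mpr inferInstance
  let ψ : AddChar F K :=
    (AddChar.zmodChar p hξ.pow_eq_one).compAddMonoidHom (Algebra.trace (ZMod p) F).toAddMonoidHom
  obtain ⟨z, hz⟩ := Algebra.trace_surjective (ZMod p) F 1
  have hψ : ψ ≠ 1 := fun h ↦ hξ.ne_one (Fact.out : p.Prime).one_lt <| by
    simpa [ψ, AddChar.zmodChar_apply, hz, ZMod.val_one] using DFunLike.congr_fun h z
  exact AddChar.sum_eq_zero_of_ne_one hψ

theorem stmt_19_general (p e : ℕ) [Fact p.Prime]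
    (hpos : 0 < p * (p ^ e - 1))
    (F : Type) [Field F] [Fintype F] [DecidableEq F] [Algebra (ZMod p) F]
    (hF : Fintype.card F = p ^ e)
    (ξp : CyclotomicField ((⟨p * (p ^ e - 1), hpos⟩ : ℕ+) : ℕ) ℚ_[p])
    (hξp : IsPrimitiveRoot ξp p)
    (T : F → CyclotomicField ((⟨p * (p ^ e - 1), hpos⟩ : ℕ+) : ℕ) ℚ_[p])
    (hT0 : T 0 = 0)
    (hTq : ∀ x, T x ^ (p ^ e) = T x)
    (hTinj : Function.Injective T)
    (g : ℕ → CyclotomicField ((⟨p * (p ^ e - 1), hpos⟩ : ℕ+) : ℕ) ℚ_[p])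
    (hg : ∀ i, g i = ∑ x ∈ (Finset.univ \ {0} : Finset F),
        ξp ^ (Algebra.trace (ZMod p) F x).val * (T x)⁻¹ ^ i)
    (lam : ℕ → CyclotomicField ((⟨p * (p ^ e - 1), hpos⟩ : ℕ+) : ℕ) ℚ_[p])
    (hlam : ∀ i, lam i = if i = 0 then 1 else if i = p ^ e - 1
        then -((p ^ e : ℕ) : CyclotomicField ((⟨p * (p ^ e - 1), hpos⟩ : ℕ+) : ℕ) ℚ_[p])
          * (((p ^ e - 1 : ℕ) : CyclotomicField ((⟨p * (p ^ e - 1), hpos⟩ : ℕ+) : ℕ) ℚ_[p]))⁻¹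
        else g i * (((p ^ e - 1 : ℕ) : CyclotomicField ((⟨p * (p ^ e - 1), hpos⟩ : ℕ+) : ℕ) ℚ_[p]))⁻¹) :
    (∀ x : F, ξp ^ (Algebra.trace (ZMod p) F x).val
        = ∑ i ∈ Finset.range (p ^ e), lam i * T x ^ i) ∧
    (∀ μ : ℕ → CyclotomicField ((⟨p * (p ^ e - 1), hpos⟩ : ℕ+) : ℕ) ℚ_[p],
      (∀ x : F, ξp ^ (Algebra.trace (ZMod p) F x).val
          = ∑ i ∈ Finset.range (p ^ e), μ i * T x ^ i) →
      ∀ i < p ^ e, μ i = lam i) := by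
  have hTq' : ∀ x, T x ^ Fintype.card F = T x := by rw [hF]; exact hTq
  have hq : ((Fintype.card F - 1 : ℕ) :
      CyclotomicField ((⟨p * (p ^ e - 1), hpos⟩ : ℕ+) : ℕ) ℚ_[p]) ≠ 0 := by
    rw [hF]; exact Nat.cast_ne_zero.mpr fun h ↦ by simp [h] at hpos
  have hlam' : lam =
      Teichmuller.expansionCoeff T fun x : F ↦ ξp ^ (Algebra.trace (ZMod p) F x).val := by
    funext i
    rw [hlam i, Teichmuller.expansionCoeff, Teichmuller.gaussCoeff_zero,
      sum_pow_trace_val_eq_zero hξp, hF]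
    simp only [map_zero, ZMod.val_zero, pow_zero]
    split_ifs
    · rfl
    · rw [hF, Nat.cast_pred (pow_pos (Fact.out : p.Prime).pos e)] at hq
      rw [Nat.cast_pred (pow_pos (Fact.out : p.Prime).pos e)]
      field_simp
      ring
    · rw [hg i, Teichmuller.gaussCoeff, div_eq_mul_inv]
  have hexp := Teichmuller.eq_sum_expansionCoeff_mul_pow hT0 hTinj hTq' hq
    (fun x : F ↦ ξp ^ (Algebra.trace (ZMod p) F x).val)
  rw [← hlam', hF] at hexp
  exact ⟨hexp, fun μ hμ i hi ↦ Teichmuller.eq_of_forall_sum_mul_pow_eq hTinj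
    (fun x ↦ by rw [hF, ← hμ x, ← hexp x]) (hF ▸ hi)⟩

/-- Let `p` be a prime and `q = p^e`.  With `λ_0 = 1`,
`λ_i = g(T^{−i})/(q−1)` for `1 ≤ i ≤ q−2` and `λ_{q−1} = −q/(q−1)` (where
`g(T^{−i})` is the Gauss sum), one has `ξ_p^{Tr_{q/p}(x)} = ∑_{i=0}^{q−1} λ_i T(x)^i`
for all `x ∈ 𝔽_q`, and this expansion is unique.

Here `ℚ_p(ξ_{p(q−1)})` is realized as `CyclotomicField (p(q−1)) ℚ_[p]`, `ξ_p` is a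
primitive `p`-th root of unity therein, and the Teichmüller lift `T` is
axiomatized by the hypotheses `hT*`. -/
theorem stmt_19 (p e : ℕ) [Fact p.Prime] (he : 1 ≤ e)
    (hpos : 0 < p * (p ^ e - 1))
    (F : Type) [Field F] [Fintype F] [DecidableEq F] [Algebra (ZMod p) F]
    (hF : Fintype.card F = p ^ e)
    (ξp : CyclotomicField ((⟨p * (p ^ e - 1), hpos⟩ : ℕ+) : ℕ) ℚ_[p])
    (hξp : IsPrimitiveRoot ξp p)
    (T : F → CyclotomicField ((⟨p * (p ^ e - 1), hpos⟩ : ℕ+) : ℕ) ℚ_[p])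
    (hT0 : T 0 = 0)
    (hTmul : ∀ x y, T (x * y) = T x * T y)
    (hTq : ∀ x, T x ^ (p ^ e) = T x)
    (hTinj : Function.Injective T)
    (g : ℕ → CyclotomicField ((⟨p * (p ^ e - 1), hpos⟩ : ℕ+) : ℕ) ℚ_[p])
    (hg : ∀ i, g i = ∑ x ∈ (Finset.univ \ {0} : Finset F),
        ξp ^ (Algebra.trace (ZMod p) F x).val * (T x)⁻¹ ^ i)
    (lam : ℕ → CyclotomicField ((⟨p * (p ^ e - 1), hpos⟩ : ℕ+) : ℕ) ℚ_[p])
    (hlam : ∀ i, lam i = if i = 0 then 1 else if i = p ^ e - 1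
        then -((p ^ e : ℕ) : CyclotomicField ((⟨p * (p ^ e - 1), hpos⟩ : ℕ+) : ℕ) ℚ_[p])
          * (((p ^ e - 1 : ℕ) : CyclotomicField ((⟨p * (p ^ e - 1), hpos⟩ : ℕ+) : ℕ) ℚ_[p]))⁻¹
        else g i * (((p ^ e - 1 : ℕ) : CyclotomicField ((⟨p * (p ^ e - 1), hpos⟩ : ℕ+) : ℕ) ℚ_[p]))⁻¹) :
    (∀ x : F, ξp ^ (Algebra.trace (ZMod p) F x).val
        = ∑ i ∈ Finset.range (p ^ e), lam i * T x ^ i) ∧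
    (∀ μ : ℕ → CyclotomicField ((⟨p * (p ^ e - 1), hpos⟩ : ℕ+) : ℕ) ℚ_[p],
      (∀ x : F, ξp ^ (Algebra.trace (ZMod p) F x).val
          = ∑ i ∈ Finset.range (p ^ e), μ i * T x ^ i) →
      ∀ i < p ^ e, μ i = lam i) :=
  stmt_19_general p e hpos F hF ξp hξp T hT0 hTq hTinj g hg lam hlam
end
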